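/- arXiv:2005.06905 — 6 statements merged into one kernel-verified Lean document; each statement's English description precedes it below -/
import Mathlib

section
/- For every t with max(0, T − 1/e) < t < T, the squared L²([0,T]²)-norm of the kernel f_t satisfies the exact identity ‖f_t‖² = (1/2)·(1 + log(T)/|log(T−t)| + ((T−t)/T)^{2α−1}/((2α−1)|log(T−t)|) − 1/((2α−1)|log(T−t)|)). -/
open MeasureTheory Real Filter Topology

/-- `λ_t := |log(T−t)|/(2α−1)`. -/
noncomputable def lam (T α t : ℝ) : ℝ := |Real.log (T - t)| / (2 * α - 1)

/-- The kernel `f_t`. -/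
noncomputable def fker (T α t : ℝ) (u v : ℝ) : ℝ :=
  if u ∈ Set.Icc (0:ℝ) t ∧ v ∈ Set.Icc (0:ℝ) t then
    (1 / (2 * Real.sqrt (lam T α t))) * (T - max u v) ^ (α - 1) * (T - min u v) ^ (-α)
  else 0

/-- The kernel `g_t`. -/
noncomputable def gker (T α t : ℝ) (u v : ℝ) : ℝ :=
  if u ∈ Set.Icc (0:ℝ) t ∧ v ∈ Set.Icc (0:ℝ) t then
    (T - u) ^ (-α) * (T - v) ^ (-α) *
      ((T - max u v) ^ (2 * α - 1) - (T - t) ^ (2 * α - 1)) / |Real.log (T - t)|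
  else 0

/-- `⟨p,q⟩ := ∫_{[0,T]²} p(u,v) q(u,v) du dv`. -/
noncomputable def ip (T : ℝ) (p q : ℝ → ℝ → ℝ) : ℝ :=
  ∫ u in Set.Icc (0:ℝ) T, ∫ v in Set.Icc (0:ℝ) T, p u v * q u v

/-- `‖p‖² := ⟨p,p⟩`. -/
noncomputable def normSq (T : ℝ) (p : ℝ → ℝ → ℝ) : ℝ := ip T p p

/-- The contraction `(p ⊗₁ q)(x,y) := ∫₀^T p(x,u) q(y,u) du`. -/
noncomputable def contr (T : ℝ) (p q : ℝ → ℝ → ℝ) : ℝ → ℝ → ℝ :=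
  fun x y => ∫ u in Set.Icc (0:ℝ) T, p x u * q y u

/-- `b_t := (1/λ_t)·∫₀ᵗ ∫₀ˢ (T−s)^{2α−2}(T−u)^{−2α} du ds`. -/
noncomputable def bfun (T α t : ℝ) : ℝ :=
  (1 / lam T α t) *
    ∫ s in (0:ℝ)..t, ∫ u in (0:ℝ)..s, (T - s) ^ (2 * α - 2) * (T - u) ^ (-(2 * α))

/-- `A_{t,1}`. -/
noncomputable def A1 (T α t : ℝ) : ℝ :=
  (1 / (lam T α t) ^ 2) *
    ∫ x4 in (0:ℝ)..t, ∫ x3 in (0:ℝ)..x4, ∫ x2 in (0:ℝ)..x3, ∫ x1 in (0:ℝ)..x2,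
      (T - x4) ^ (2 * α - 2) * (T - x3) ^ (-1 : ℝ) * (T - x2) ^ (-1 : ℝ) *
        (T - x1) ^ (-(2 * α))

/-- `A_{t,2}`. -/
noncomputable def A2 (T α t : ℝ) : ℝ :=
  (1 / (2 * (lam T α t) ^ 2)) *
    ∫ x4 in (0:ℝ)..t, ∫ x2 in (0:ℝ)..x4, ∫ x3 in (0:ℝ)..x2, ∫ x1 in (0:ℝ)..x3,
      (T - x4) ^ (2 * α - 2) * (T - x2) ^ (2 * α - 2) * (T - x3) ^ (-(2 * α)) *
        (T - x1) ^ (-(2 * α))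

/-!
Squaring `f_t` gives `1/(4λ_t)` times the kernel `(T - max u v)^(β-1) (T - min u v)^(-β-1)`,
`β = 2α - 1`, on `[0,t]²`. Splitting the inner integral at `v = u` leaves elementary power
integrals whose leading terms add up to `2 (T - u)⁻¹`; integrating that in `u` produces
`2 (log T - log (T - t))`, and the remaining powers produce `((T - t)/T)^β` and `1`.
-/

section SubPowIntegrals

variable {a b c : ℝ}

lemma zero_notMem_uIcc_sub (ha : a < c) (hb : b < c) : (0 : ℝ) ∉ Set.uIcc (c - b) (c - a) :=
  Set.notMem_uIcc_of_lt (sub_pos.2 hb) (sub_pos.2 ha)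

lemma integral_sub_rpow (ha : a < c) (hb : b < c) {p : ℝ} (hp : p ≠ -1) :
    ∫ x in a..b, (c - x) ^ p = ((c - a) ^ (p + 1) - (c - b) ^ (p + 1)) / (p + 1) := by
  rw [intervalIntegral.integral_comp_sub_left (· ^ p) c,
    integral_rpow (Or.inr ⟨hp, zero_notMem_uIcc_sub ha hb⟩)]

lemma integral_sub_inv (ha : a < c) (hb : b < c) :
    ∫ x in a..b, (c - x)⁻¹ = Real.log (c - a) - Real.log (c - b) := by
  rw [intervalIntegral.integral_comp_sub_left (·⁻¹) c,
    integral_inv (zero_notMem_uIcc_sub ha hb), Real.log_div (sub_pos.2 ha).ne' (sub_pos.2 hb).ne']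

lemma intervalIntegrable_sub_rpow (ha : a < c) (hb : b < c) (p : ℝ) :
    IntervalIntegrable (fun x => (c - x) ^ p) volume a b := by
  refine (ContinuousOn.rpow_const (continuous_const.sub continuous_id).continuousOn
    fun x hx => Or.inl ?_).intervalIntegrable
  exact (sub_pos.2 (hx.2.trans_lt (max_lt ha hb))).ne'

end SubPowIntegrals

noncomputable def maxMinKernel (T β u v : ℝ) : ℝ :=
  (T - max u v) ^ (β - 1) * (T - min u v) ^ (-β - 1)

section MaxMinKernel

variable {T β t : ℝ}

lemma intervalIntegrable_maxMinKernel {u a b : ℝ} (hu : u < T) (ha : a < T) (hb : b < T) :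
    IntervalIntegrable (maxMinKernel T β u) volume a b := by
  refine (ContinuousOn.mul ?_ ?_).intervalIntegrable <;>
    refine ContinuousOn.rpow_const (by fun_prop) fun v hv => Or.inl (sub_pos.2 ?_).ne'
  · exact max_lt hu (hv.2.trans_lt (max_lt ha hb))
  · exact (min_le_left u v).trans_lt hu

lemma integral_maxMinKernel (hβ : β ≠ 0) {u : ℝ} (hu : u ∈ Set.Icc 0 t) (htT : t < T) :
    ∫ v in (0:ℝ)..t, maxMinKernel T β u v =
      (2 * (T - u)⁻¹ - T ^ (-β) * (T - u) ^ (β - 1) - (T - t) ^ β * (T - u) ^ (-β - 1)) /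
        β := by
  obtain ⟨hu0, hut⟩ := hu
  have huT : u < T := hut.trans_lt htT
  have h0T : 0 < T := hu0.trans_lt huT
  have hTu : 0 < T - u := sub_pos.2 huT
  have below : ∫ v in (0:ℝ)..u, maxMinKernel T β u v =
      (T - u) ^ (β - 1) * (T ^ (-β) - (T - u) ^ (-β)) / -β := by
    rw [intervalIntegral.integral_congr (g := fun v => (T - u) ^ (β - 1) * (T - v) ^ (-β - 1)),
      intervalIntegral.integral_const_mul,
      integral_sub_rpow h0T huT (by contrapose! hβ; linarith)]
    · simp only [sub_zero, show -β - 1 + 1 = -β by ring, mul_div_assoc]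
    · intro v hv
      rw [Set.uIcc_of_le hu0] at hv
      simp only [maxMinKernel, max_eq_left hv.2, min_eq_right hv.2]
  have above : ∫ v in u..t, maxMinKernel T β u v =
      (T - u) ^ (-β - 1) * ((T - u) ^ β - (T - t) ^ β) / β := by
    rw [intervalIntegral.integral_congr (g := fun v => (T - u) ^ (-β - 1) * (T - v) ^ (β - 1)),
      intervalIntegral.integral_const_mul,
      integral_sub_rpow huT htT (by contrapose! hβ; linarith)]
    · simp only [sub_add_cancel, mul_div_assoc]
    · intro v hv
      rw [Set.uIcc_of_le hut] at hv
      simp only [maxMinKernel, max_eq_right hv.1, min_eq_left hv.1, mul_comm]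
  rw [← intervalIntegral.integral_add_adjacent_intervals
    (intervalIntegrable_maxMinKernel huT h0T huT) (intervalIntegrable_maxMinKernel huT huT htT),
    below, above]
  have inv_below : (T - u) ^ (β - 1) * (T - u) ^ (-β) = (T - u)⁻¹ := by
    rw [← rpow_add hTu, ← rpow_neg_one]; ring_nf
  have inv_above : (T - u) ^ (-β - 1) * (T - u) ^ β = (T - u)⁻¹ := by
    rw [← rpow_add hTu, ← rpow_neg_one]; ring_nf
  linear_combination (inv_below + inv_above) / β

lemma integral_integral_maxMinKernel (hβ : β ≠ 0) (ht : 0 ≤ t) (htT : t < T) :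
    ∫ u in (0:ℝ)..t, ∫ v in (0:ℝ)..t, maxMinKernel T β u v =
      2 / β * (Real.log T - Real.log (T - t) - (1 - ((T - t) / T) ^ β) / β) := by
  have h0T : 0 < T := ht.trans_lt htT
  have hTt : 0 < T - t := sub_pos.2 htT
  have integrable := intervalIntegrable_sub_rpow h0T htT
  have integrable_inv : IntervalIntegrable (fun x => 2 * (T - x)⁻¹) volume 0 t := by
    simpa only [rpow_neg_one] using (integrable (-1)).const_mul 2
  rw [intervalIntegral.integral_congr fun u hu =>
      integral_maxMinKernel hβ (Set.uIcc_of_le ht ▸ hu) htT,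
    intervalIntegral.integral_div,
    intervalIntegral.integral_sub (integrable_inv.sub ((integrable _).const_mul _))
      ((integrable _).const_mul _),
    intervalIntegral.integral_sub integrable_inv ((integrable _).const_mul _),
    intervalIntegral.integral_const_mul, intervalIntegral.integral_const_mul,
    intervalIntegral.integral_const_mul, integral_sub_inv h0T htT,
    integral_sub_rpow h0T htT (by contrapose! hβ; linarith),
    integral_sub_rpow h0T htT (by contrapose! hβ; linarith)]
  simp only [sub_zero, sub_add_cancel, show -β - 1 + 1 = -β by ring]
  rw [div_rpow hTt.le h0T.le, rpow_neg h0T.le, rpow_neg hTt.le]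
  have hTβ : T ^ β ≠ 0 := (rpow_pos_of_pos h0T β).ne'
  have hTtβ : (T - t) ^ β ≠ 0 := (rpow_pos_of_pos hTt β).ne'
  field_simp
  ring

end MaxMinKernel

lemma setIntegral_Icc_indicator_Icc {T t : ℝ} (ht : 0 ≤ t) (htT : t ≤ T) (g : ℝ → ℝ) :
    ∫ x in Set.Icc 0 T, (Set.Icc 0 t).indicator g x = ∫ x in (0:ℝ)..t, g x := by
  rw [setIntegral_indicator measurableSet_Icc,
    Set.inter_eq_self_of_subset_right (Set.Icc_subset_Icc le_rfl htT),
    integral_Icc_eq_integral_Ioc, intervalIntegral.integral_of_le ht]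

section Kernel

variable {T α t : ℝ}

lemma fker_mul_self (hlam : 0 ≤ lam T α t) (htT : t < T) (u v : ℝ) :
    fker T α t u v * fker T α t u v =
      if u ∈ Set.Icc 0 t ∧ v ∈ Set.Icc 0 t then
        1 / (4 * lam T α t) * maxMinKernel T (2 * α - 1) u v
      else 0 := by
  unfold fker maxMinKernel
  split_ifs with h
  · obtain ⟨⟨-, hut⟩, ⟨-, hvt⟩⟩ := h
    have hmax : 0 < T - max u v := sub_pos.2 ((max_le hut hvt).trans_lt htT)
    have hmin : 0 < T - min u v := hmax.trans_le (by gcongr; exact min_le_max)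
    have four_lam : 4 * lam T α t = 2 * √(lam T α t) * (2 * √(lam T α t)) := by
      rw [mul_mul_mul_comm, mul_self_sqrt hlam]; norm_num
    rw [show 2 * α - 1 - 1 = (α - 1) + (α - 1) by ring,
      show -(2 * α - 1) - 1 = -α + -α by ring, rpow_add hmax, rpow_add hmin, four_lam]
    ring
  · simp

lemma normSq_fker (hlam : 0 ≤ lam T α t) (ht : 0 ≤ t) (htT : t < T) :
    normSq T (fker T α t) = 1 / (4 * lam T α t) *
      ∫ u in (0:ℝ)..t, ∫ v in (0:ℝ)..t, maxMinKernel T (2 * α - 1) u v := by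
  have inner (u : ℝ) : ∫ v in Set.Icc 0 T, fker T α t u v * fker T α t u v =
      (Set.Icc 0 t).indicator
        (fun u => ∫ v in (0:ℝ)..t, 1 / (4 * lam T α t) * maxMinKernel T (2 * α - 1) u v)
        u := by
    simp only [fker_mul_self hlam htT]
    by_cases hu : u ∈ Set.Icc 0 t
    · simp only [hu, true_and, Set.indicator_of_mem]
      rw [← setIntegral_Icc_indicator_Icc ht htT.le]
      simp only [Set.indicator_apply]
    · simp [hu]
  simp only [normSq, ip, inner, setIntegral_Icc_indicator_Icc ht htT.le,
    intervalIntegral.integral_const_mul]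

end Kernel

theorem stmt_0_general (T α : ℝ) (hα : 1 / 2 < α)
    (t : ℝ) (ht1 : max 0 (T - 1 / Real.exp 1) < t) (ht2 : t < T) :
    normSq T (fker T α t) =
      (1 / 2) * (1 + Real.log T / |Real.log (T - t)|
        + ((T - t) / T) ^ (2 * α - 1) / ((2 * α - 1) * |Real.log (T - t)|)
        - 1 / ((2 * α - 1) * |Real.log (T - t)|)) := by
  obtain ⟨ht0, hTt⟩ := max_lt_iff.1 ht1
  have hβ : 0 < 2 * α - 1 := by linarith
  have hexp : 1 / Real.exp 1 < 1 := (div_lt_one (exp_pos 1)).2 (by simp)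
  have hlog : Real.log (T - t) < 0 := Real.log_neg (by linarith) (by linarith)
  have hlam : 0 < lam T α t := div_pos (abs_pos.2 hlog.ne) hβ
  rw [normSq_fker hlam.le ht0.le ht2, integral_integral_maxMinKernel hβ.ne' ht0.le ht2, lam,
    abs_of_neg hlog]
  have hlog_ne := hlog.ne
  field_simp
  ring

theorem stmt_0 (T α : ℝ) (hT : 0 < T) (hα : 1 / 2 < α)
    (t : ℝ) (ht1 : max 0 (T - 1 / Real.exp 1) < t) (ht2 : t < T) :
    normSq T (fker T α t) =
      (1 / 2) * (1 + Real.log T / |Real.log (T - t)|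
        + ((T - t) / T) ^ (2 * α - 1) / ((2 * α - 1) * |Real.log (T - t)|)
        - 1 / ((2 * α - 1) * |Real.log (T - t)|)) :=
  stmt_0_general T α hα t ht1 ht2
end

section
/- As t ↑ T, λ_t·(b_t² − 1) converges to 2·log(T)/(2α−1) − 2/(2α−1)²; equivalently, b_t² − 1 = 2log(T)/((2α−1)λ_t) − 2/((2α−1)²λ_t) + o(1/λ_t). -/
/-!
The inner integral in `b_t` is elementary, and integrating once more gives
`λ_t b_t = λ_t + R_t` with `R_t = log T/(2α-1) - (1 - ((T-t)/T)^(2α-1))/(2α-1)²`: the `λ_t`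
is the integral of `(T-s)⁻¹` over `[0,t]`. Hence `λ_t (b_t² - 1) = 2 R_t + R_t²/λ_t`, and
the claim follows from `R_t → log T/(2α-1) - 1/(2α-1)²` and `λ_t → ∞` as `t ↑ T`.
-/

open MeasureTheory Real Filter Topology

lemma zero_notMem_uIcc_const_sub {T c d : ℝ} (hc : c < T) (hd : d < T) :
    (0 : ℝ) ∉ Set.uIcc (T - d) (T - c) := by
  rintro ⟨h, -⟩
  simp only [inf_le_iff] at h
  rcases h with h | h <;> linarith

lemma integral_const_sub_rpow {T r c d : ℝ} (hc : c < T) (hd : d < T) (hr : r ≠ -1) :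
    ∫ u in c..d, (T - u) ^ r = ((T - c) ^ (r + 1) - (T - d) ^ (r + 1)) / (r + 1) := by
  rw [intervalIntegral.integral_comp_sub_left (fun x : ℝ => x ^ r) T,
    integral_rpow (Or.inr ⟨hr, zero_notMem_uIcc_const_sub hc hd⟩)]

lemma integral_const_sub_inv {T c d : ℝ} (hc : c < T) (hd : d < T) :
    ∫ u in c..d, (T - u)⁻¹ = log (T - c) - log (T - d) := by
  rw [intervalIntegral.integral_comp_sub_left (fun x : ℝ => x⁻¹) T,
    integral_inv (zero_notMem_uIcc_const_sub hc hd),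
    log_div (by linarith) (by linarith)]

lemma integral_bfun_inner {T α s : ℝ} (hT : 0 < T) (hs : s < T) (hα : 2 * α - 1 ≠ 0) :
    ∫ u in (0:ℝ)..s, (T - s) ^ (2 * α - 2) * (T - u) ^ (-(2 * α)) =
      ((T - s)⁻¹ - T ^ (1 - 2 * α) * (T - s) ^ (2 * α - 2)) / (2 * α - 1) := by
  have hTs : 0 < T - s := by linarith
  have hα' : 1 - 2 * α ≠ 0 := by contrapose! hα; linarith
  have hpow : (T - s) ^ (2 * α - 2) * (T - s) ^ (1 - 2 * α) = (T - s)⁻¹ := by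
    rw [← rpow_add hTs, ← rpow_neg_one]
    ring_nf
  rw [intervalIntegral.integral_const_mul,
    integral_const_sub_rpow hT hs (by contrapose! hα; linarith), sub_zero, ← hpow,
    show -(2 * α) + 1 = 1 - 2 * α by ring]
  field_simp
  ring

noncomputable def bfunRemainder (T α t : ℝ) : ℝ :=
  log T / (2 * α - 1) - (1 - ((T - t) / T) ^ (2 * α - 1)) / (2 * α - 1) ^ 2

lemma integral_bfun {T α t : ℝ} (hT : 0 < T) (ht : t < T) (hα : 2 * α - 1 ≠ 0) :
    ∫ s in (0:ℝ)..t, ∫ u in (0:ℝ)..s, (T - s) ^ (2 * α - 2) * (T - u) ^ (-(2 * α)) =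
      -log (T - t) / (2 * α - 1) + bfunRemainder T α t := by
  have hpos : ∀ s ∈ Set.uIcc (0:ℝ) t, 0 < T - s := fun s hs =>
    sub_pos.2 (hs.2.trans_lt (max_lt hT ht))
  have hinv : IntervalIntegrable (fun s => (T - s)⁻¹) volume 0 t :=
    (ContinuousOn.inv₀ (by fun_prop) fun s hs => (hpos s hs).ne').intervalIntegrable
  have hrpow : IntervalIntegrable (fun s => (T - s) ^ (2 * α - 2)) volume 0 t :=
    (ContinuousOn.rpow_const (by fun_prop) fun s hs => Or.inl (hpos s hs).ne').intervalIntegrable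
  rw [intervalIntegral.integral_congr fun s hs =>
      integral_bfun_inner hT (sub_pos.1 (hpos s hs)) hα,
    intervalIntegral.integral_div, intervalIntegral.integral_sub hinv (hrpow.const_mul _),
    intervalIntegral.integral_const_mul, integral_const_sub_inv hT ht,
    integral_const_sub_rpow hT ht (by contrapose! hα; linarith), bfunRemainder,
    div_rpow (sub_pos.2 ht).le hT.le, sub_zero, show 2 * α - 2 + 1 = 2 * α - 1 by ring,
    show 1 - 2 * α = -(2 * α - 1) by ring, rpow_neg hT.le]
  have hTpow : T ^ (2 * α - 1) ≠ 0 := (rpow_pos_of_pos hT _).ne'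
  field_simp
  ring

lemma lam_eq_neg_log_div {T α t : ℝ} (ht : t < T) (ht' : T - 1 ≤ t) :
    lam T α t = -log (T - t) / (2 * α - 1) := by
  rw [lam, abs_of_nonpos (log_nonpos (sub_pos.2 ht).le (by linarith))]

lemma bfun_eq_one_add {T α t : ℝ} (hT : 0 < T) (hα : 2 * α - 1 ≠ 0) (ht : t < T)
    (ht' : T - 1 < t) : bfun T α t = 1 + bfunRemainder T α t / lam T α t := by
  have hlog : log (T - t) ≠ 0 := (log_neg (sub_pos.2 ht) (by linarith)).ne
  have hlam : lam T α t ≠ 0 := by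
    rw [lam_eq_neg_log_div ht ht'.le]
    exact div_ne_zero (neg_ne_zero.2 hlog) hα
  rw [bfun, integral_bfun hT ht hα, ← lam_eq_neg_log_div ht ht'.le]
  field_simp

lemma tendsto_const_sub_nhdsLT (T : ℝ) :
    Tendsto (fun t => T - t) (𝓝[<] T) (𝓝[>] 0) := by
  refine tendsto_nhdsWithin_iff.2 ⟨?_, eventually_nhdsWithin_of_forall fun t ht => ?_⟩
  · exact ((continuous_sub_left T).tendsto' T 0 (sub_self T)).mono_left nhdsWithin_le_nhds
  · exact sub_pos.2 (Set.mem_Iio.1 ht)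

lemma tendsto_lam_atTop (T : ℝ) {α : ℝ} (hα : 1 / 2 < α) :
    Tendsto (lam T α) (𝓝[<] T) atTop :=
  (tendsto_abs_atBot_atTop.comp (tendsto_log_nhdsGT_zero.comp
    (tendsto_const_sub_nhdsLT T))).atTop_div_const (by linarith)

lemma tendsto_bfunRemainder (T : ℝ) {α : ℝ} (hα : 1 / 2 < α) :
    Tendsto (bfunRemainder T α) (𝓝[<] T)
      (𝓝 (log T / (2 * α - 1) - 1 / (2 * α - 1) ^ 2)) := by
  have hD : 0 < 2 * α - 1 := by linarith
  have hquot : Tendsto (fun t => (T - t) / T) (𝓝[<] T) (𝓝 0) := by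
    simpa using ((tendsto_const_sub_nhdsLT T).mono_right nhdsWithin_le_nhds).div_const T
  have hratio : Tendsto (fun t => ((T - t) / T) ^ (2 * α - 1)) (𝓝[<] T) (𝓝 0) := by
    simpa [Function.comp_def, zero_rpow hD.ne'] using
      (continuousAt_rpow_const 0 (2 * α - 1) (Or.inr hD.le)).tendsto.comp hquot
  have h := (tendsto_const_nhds (x := log T / (2 * α - 1))).sub
    (((tendsto_const_nhds (x := (1 : ℝ))).sub hratio).div_const ((2 * α - 1) ^ 2))
  rw [sub_zero] at h
  exact h

theorem stmt_3 (T α : ℝ) (hT : 0 < T) (hα : 1 / 2 < α) :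
    Tendsto (fun t => lam T α t * ((bfun T α t) ^ 2 - 1))
      (𝓝[<] T) (𝓝 (2 * Real.log T / (2 * α - 1) - 2 / (2 * α - 1) ^ 2)) := by
  have hR := tendsto_bfunRemainder T hα
  have hlam := tendsto_lam_atTop T hα
  have hexpand : ∀ᶠ t in 𝓝[<] T, lam T α t * ((bfun T α t) ^ 2 - 1) =
      2 * bfunRemainder T α t + bfunRemainder T α t * (bfunRemainder T α t / lam T α t) := by
    filter_upwards [Ioo_mem_nhdsLT (show T - 1 < T by linarith),
      hlam.eventually_ne_atTop 0] with t ht hlam0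
    rw [bfun_eq_one_add hT (by linarith) ht.2 ht.1]
    field_simp
    ring
  refine Tendsto.congr' (EventuallyEq.symm hexpand) ?_
  convert (hR.const_mul 2).add (hR.mul (hR.div_atTop hlam)) using 2
  ring
end

section
/- For every t with max(0, T − 1/e) < t < T, the squared norm of the contraction satisfies the exact decomposition ‖f_t ⊗₁ f_t‖² = A_{t,1} + A_{t,2}, where A_{t,1} := (1/λ_t²)·∫_{0<x₁<x₂<x₃<x₄<t} (T−x₄)^{2α−2}(T−x₃)^{−1}(T−x₂)^{−1}(T−x₁)^{−2α} dx₁dx₂dx₃dx₄ and A_{t,2} := (1/(2λ_t²))·∫_{0<x₁<x₃<x₂<x₄<t} (T−x₄)^{2α−2}(T−x₂)^{2α−2}(T−x₃)^{−2α}(T−x₁)^{−2α} dx₁dx₃dx₂dx₄. -/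
open MeasureTheory Real Filter Topology

/-!
Write points of `[0,t]⁴` as `z = ((x, y), (u, v))`. By Fubini, `‖f_t ⊗₁ f_t‖²` is the integral
of `f(x,u) f(y,u) f(x,v) f(y,v)` over `[0,t]⁴`. This integrand is invariant under `x ↔ y`,
`u ↔ v` and `(x, y) ↔ (u, v)`, so the integral is eight times the integral over
`{v ≤ u, y ≤ x, u ≤ x}`. Up to null sets this region is the union of the three orders
`x ≥ y ≥ u ≥ v`, `x ≥ u ≥ y ≥ v` and `x ≥ u ≥ v ≥ y`, on each of which the integrand is an
explicit product of powers of `T - ·`: the first order gives `A_{t,2}`, the other two give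
`A_{t,1}` between them.
-/

notation:max μ:max "⊗⁴" =>
  MeasureTheory.Measure.prod (MeasureTheory.Measure.prod μ μ) (MeasureTheory.Measure.prod μ μ)

namespace MeasurableEquiv

variable (α β γ δ : Type*) [MeasurableSpace α] [MeasurableSpace β] [MeasurableSpace γ]
  [MeasurableSpace δ]

def prodProdProdComm : (α × β) × γ × δ ≃ᵐ (α × γ) × β × δ :=
  prodAssoc.trans <| (prodCongr (refl α) <|
    prodAssoc.symm.trans <| (prodCongr prodComm (refl δ)).trans prodAssoc).trans prodAssoc.symm

end MeasurableEquiv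

namespace MeasureTheory

section Products

variable {α β γ δ : Type*} [MeasurableSpace α] [MeasurableSpace β] [MeasurableSpace γ]
  [MeasurableSpace δ] {μ₁ : Measure α} {μ₂ : Measure β} {μ₃ : Measure γ} {μ₄ : Measure δ}
  [SFinite μ₁] [SFinite μ₂] [SFinite μ₃] [SFinite μ₄]

theorem measurePreserving_prodProdProdComm :
    MeasurePreserving (MeasurableEquiv.prodProdProdComm α β γ δ)
      ((μ₁.prod μ₂).prod (μ₃.prod μ₄)) ((μ₁.prod μ₃).prod (μ₂.prod μ₄)) :=
  (measurePreserving_prodAssoc μ₁ μ₂ (μ₃.prod μ₄)).trans <|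
    ((MeasurePreserving.id μ₁).prod <|
      ((measurePreserving_prodAssoc μ₂ μ₃ μ₄).symm _).trans <|
        (Measure.measurePreserving_swap.prod (MeasurePreserving.id μ₄)).trans
          (measurePreserving_prodAssoc μ₃ μ₂ μ₄)).trans
      ((measurePreserving_prodAssoc μ₁ μ₃ (μ₂.prod μ₄)).symm _)

theorem integral_prod_prod_eq_iterated {W : (α × β) × (γ × δ) → ℝ}
    (hW : Integrable W ((μ₁.prod μ₂).prod (μ₃.prod μ₄))) :
    ∫ z, W z ∂((μ₁.prod μ₂).prod (μ₃.prod μ₄))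
      = ∫ x, ∫ y, ∫ u, ∫ v, W ((x, y), (u, v)) ∂μ₄ ∂μ₃ ∂μ₂ ∂μ₁ := by
  have hfib : (fun p => ∫ q, W (p, q) ∂(μ₃.prod μ₄)) =ᵐ[μ₁.prod μ₂]
      fun p => ∫ u, ∫ v, W (p, (u, v)) ∂μ₄ ∂μ₃ := by
    filter_upwards [hW.prod_right_ae] with p hp using integral_prod _ hp
  rw [integral_prod _ hW, integral_congr_ae hfib,
    integral_prod _ (hW.integral_prod_left.congr hfib)]

end Products

theorem measure_prod_setOf_fst_eq_snd {α : Type*} [MeasurableSpace α] [MeasurableEq α]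
    (μ ν : Measure α) [SFinite ν] [NullSingletonClass ν] :
    (μ.prod ν) {q | q.1 = q.2} = 0 :=
  (Measure.measure_prod_null (measurableSet_eq_fun measurable_fst measurable_snd)).2 <|
    ae_of_all _ fun x => by simp [Set.preimage]

theorem setIntegral_eq_two_mul_setIntegral_inter_le {X : Type*} [MeasurableSpace X]
    {μ : Measure X} (e : X ≃ᵐ X) (he : MeasurePreserving e μ μ) {s : Set X} (hse : e ⁻¹' s = s)
    {g h : X → ℝ} (hg : Measurable g) (hh : Measurable h) (hge : ∀ x, g (e x) = h x)
    (hhe : ∀ x, h (e x) = g x) (hnull : μ {x | g x = h x} = 0) {W : X → ℝ}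
    (hWe : ∀ x, W (e x) = W x) (hW : IntegrableOn W s μ) :
    ∫ x in s, W x ∂μ = 2 * ∫ x in s ∩ {x | h x ≤ g x}, W x ∂μ := by
  have hpre : e ⁻¹' (s ∩ {x | h x < g x}) = s \ {x | h x ≤ g x} := by
    ext x; rw [Set.preimage_inter, hse]; simp [hge, hhe]
  have hae : (s ∩ {x | h x < g x} : Set X) =ᵐ[μ] (s ∩ {x | h x ≤ g x} : Set X) := by
    refine (ae_eq_refl s).inter (eventuallyEq_set.2 ?_)
    filter_upwards [measure_eq_zero_iff_ae_notMem.1 hnull] with x hx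
    exact ⟨le_of_lt, fun hle => lt_of_le_of_ne hle (Ne.symm hx)⟩
  calc ∫ x in s, W x ∂μ
      = ∫ x in s ∩ {x | h x ≤ g x}, W x ∂μ
          + ∫ x in e ⁻¹' (s ∩ {x | h x < g x}), W (e x) ∂μ := by
        rw [← integral_inter_add_sdiff (measurableSet_le hh hg) hW, hpre]; simp only [hWe]
    _ = 2 * ∫ x in s ∩ {x | h x ≤ g x}, W x ∂μ := by
        rw [he.setIntegral_preimage_emb e.measurableEmbedding, setIntegral_congr_set hae]; ring

end MeasureTheory

def antitoneQuadruples : Set ((ℝ × ℝ) × (ℝ × ℝ)) :=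
  {z | z.1.2 ≤ z.1.1 ∧ z.2.1 ≤ z.1.2 ∧ z.2.2 ≤ z.2.1}

def sortedPairs : Set ((ℝ × ℝ) × (ℝ × ℝ)) :=
  {z | z.2.2 ≤ z.2.1 ∧ z.1.2 ≤ z.1.1 ∧ z.2.1 ≤ z.1.1}

theorem measurableSet_antitoneQuadruples : MeasurableSet antitoneQuadruples := by
  unfold antitoneQuadruples; measurability

theorem setIntegral_Icc_eq_intervalIntegral {t x : ℝ} (hx : x ∈ Set.Icc 0 t) {f g : ℝ → ℝ}
    (hf : ∀ y, x < y → f y = 0) (hfg : ∀ y ∈ Set.Icc 0 x, f y = g y) :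
    ∫ y in Set.Icc 0 t, f y = ∫ y in 0..x, g y := by
  rw [intervalIntegral.integral_of_le hx.1, ← integral_Icc_eq_integral_Ioc,
    ← setIntegral_congr_fun measurableSet_Icc hfg]
  refine setIntegral_eq_of_subset_of_forall_sdiff_eq_zero measurableSet_Icc
    (Set.Icc_subset_Icc_right hx.2) fun y hy => hf y ?_
  exact lt_of_not_ge fun hyx => hy.2 ⟨hy.1.1, hyx⟩

theorem setIntegral_antitoneQuadruples {t : ℝ} (ht : 0 ≤ t) {F : (ℝ × ℝ) × (ℝ × ℝ) → ℝ}
    (hF : Integrable F (volume.restrict (Set.Icc 0 t))⊗⁴) (G : ℝ → ℝ → ℝ → ℝ → ℝ)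
    (hFG : ∀ x y u v, 0 ≤ v → v ≤ u → u ≤ y → y ≤ x → x ≤ t → F ((x, y), (u, v)) = G x y u v) :
    ∫ z in antitoneQuadruples, F z ∂(volume.restrict (Set.Icc 0 t))⊗⁴
      = ∫ x in 0..t, ∫ y in 0..x, ∫ u in 0..y, ∫ v in 0..u, G x y u v := by
  rw [← integral_indicator measurableSet_antitoneQuadruples,
    integral_prod_prod_eq_iterated (hF.indicator measurableSet_antitoneQuadruples),
    intervalIntegral.integral_of_le ht, ← integral_Icc_eq_integral_Ioc]
  refine setIntegral_congr_fun measurableSet_Icc fun x hx => ?_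
  refine setIntegral_Icc_eq_intervalIntegral hx
    (fun y hxy => by simp [antitoneQuadruples, hxy.not_ge]) fun y hy => ?_
  refine setIntegral_Icc_eq_intervalIntegral ⟨hy.1, hy.2.trans hx.2⟩
    (fun u hyu => by simp [antitoneQuadruples, hyu.not_ge]) fun u hu => ?_
  refine setIntegral_Icc_eq_intervalIntegral ⟨hu.1, hu.2.trans (hy.2.trans hx.2)⟩
    (fun v huv => by simp [antitoneQuadruples, huv.not_ge]) fun v hv => ?_
  rw [Set.indicator_of_mem
    (show ((x, y), (u, v)) ∈ antitoneQuadruples from ⟨hy.2, hu.2, hv.2⟩)]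
  exact hFG x y u v hv.1 hv.2 hu.2 hy.2 hx.2

section Quadruples

variable {μ : Measure ℝ} [SFinite μ] [NullSingletonClass μ]

theorem measure_setOf_fst_eq_snd_of_quasiMeasurePreserving
    {φ : (ℝ × ℝ) × (ℝ × ℝ) → ℝ × ℝ} (hφ : Measure.QuasiMeasurePreserving φ μ⊗⁴ (μ.prod μ)) :
    μ⊗⁴ {z | (φ z).1 = (φ z).2} = 0 :=
  hφ.preimage_null (measure_prod_setOf_fst_eq_snd μ μ)

/-- The three integrals on the right are over `x ≥ y ≥ u ≥ v`, `x ≥ u ≥ y ≥ v` and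
`x ≥ u ≥ v ≥ y`, which cover `sortedPairs` and overlap only where `y = u` or `y = v`. -/
theorem setIntegral_sortedPairs {F : (ℝ × ℝ) × (ℝ × ℝ) → ℝ} (hF : Integrable F μ⊗⁴) :
    ∫ z in sortedPairs, F z ∂μ⊗⁴
      = ∫ z in antitoneQuadruples, F z ∂μ⊗⁴
        + ∫ z in antitoneQuadruples, F ((z.1.1, z.2.1), (z.1.2, z.2.2)) ∂μ⊗⁴
        + ∫ z in antitoneQuadruples, F ((z.1.1, z.2.2), (z.1.2, z.2.1)) ∂μ⊗⁴ := by
  set e₂ := MeasurableEquiv.prodProdProdComm ℝ ℝ ℝ ℝ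
  set e₃ := e₂.trans (MeasurableEquiv.prodCongr (.refl _) .prodComm)
  have he₂ : MeasurePreserving e₂ μ⊗⁴ μ⊗⁴ := measurePreserving_prodProdProdComm
  have he₃ : MeasurePreserving e₃ μ⊗⁴ μ⊗⁴ :=
    he₂.trans ((MeasurePreserving.id _).prod Measure.measurePreserving_swap)
  have hcover : sortedPairs = antitoneQuadruples ∪ e₂ ⁻¹' antitoneQuadruples
      ∪ e₃ ⁻¹' antitoneQuadruples := by
    ext ⟨⟨x, y⟩, u, v⟩
    show v ≤ u ∧ y ≤ x ∧ u ≤ x ↔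
      (y ≤ x ∧ u ≤ y ∧ v ≤ u ∨ u ≤ x ∧ y ≤ u ∧ v ≤ y) ∨ u ≤ x ∧ v ≤ u ∧ y ≤ v
    grind
  have hyu := measure_setOf_fst_eq_snd_of_quasiMeasurePreserving (μ := μ)
    (by fun_prop : Measure.QuasiMeasurePreserving (Prod.map Prod.snd Prod.fst) _ _)
  have hyv := measure_setOf_fst_eq_snd_of_quasiMeasurePreserving (μ := μ)
    (by fun_prop : Measure.QuasiMeasurePreserving (Prod.map Prod.snd Prod.snd) _ _)
  have h₁₂ : AEDisjoint μ⊗⁴ antitoneQuadruples (e₂ ⁻¹' antitoneQuadruples) :=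
    measure_mono_null (fun z ⟨h₁, h₂⟩ => le_antisymm h₂.2.1 h₁.2.1) hyu
  have h₁₃ : AEDisjoint μ⊗⁴ antitoneQuadruples (e₃ ⁻¹' antitoneQuadruples) :=
    measure_mono_null (fun z ⟨h₁, h₃⟩ => le_antisymm (h₃.2.2.trans h₃.2.1) h₁.2.1) hyu
  have h₂₃ : AEDisjoint μ⊗⁴ (e₂ ⁻¹' antitoneQuadruples) (e₃ ⁻¹' antitoneQuadruples) :=
    measure_mono_null (fun z ⟨h₂, h₃⟩ => le_antisymm h₃.2.2 h₂.2.2) hyv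
  have hmeas : ∀ e : (ℝ × ℝ) × (ℝ × ℝ) ≃ᵐ (ℝ × ℝ) × (ℝ × ℝ),
      NullMeasurableSet (e ⁻¹' antitoneQuadruples) μ⊗⁴ :=
    fun e => (e.measurable measurableSet_antitoneQuadruples).nullMeasurableSet
  rw [hcover,
    setIntegral_union₀ (h₁₃.union_left h₂₃) (hmeas e₃) hF.integrableOn hF.integrableOn,
    setIntegral_union₀ h₁₂ (hmeas e₂) hF.integrableOn hF.integrableOn,
    ← he₂.setIntegral_preimage_emb e₂.measurableEmbedding
      (fun z => F ((z.1.1, z.2.1), (z.1.2, z.2.2))),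
    ← he₃.setIntegral_preimage_emb e₃.measurableEmbedding
      (fun z => F ((z.1.1, z.2.2), (z.1.2, z.2.1)))]
  rfl

end Quadruples

def contrSqIntegrand (k : ℝ → ℝ → ℝ) (z : (ℝ × ℝ) × (ℝ × ℝ)) : ℝ :=
  k z.1.1 z.2.1 * k z.1.2 z.2.1 * (k z.1.1 z.2.2 * k z.1.2 z.2.2)

theorem contrSqIntegrand_swap_right (k : ℝ → ℝ → ℝ) (z : (ℝ × ℝ) × (ℝ × ℝ)) :
    contrSqIntegrand k (z.1, z.2.swap) = contrSqIntegrand k z := by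
  simp only [contrSqIntegrand, Prod.fst_swap, Prod.snd_swap]; ring

theorem contrSqIntegrand_swap_left (k : ℝ → ℝ → ℝ) (z : (ℝ × ℝ) × (ℝ × ℝ)) :
    contrSqIntegrand k (z.1.swap, z.2) = contrSqIntegrand k z := by
  simp only [contrSqIntegrand, Prod.fst_swap, Prod.snd_swap]; ring

theorem contrSqIntegrand_swap {k : ℝ → ℝ → ℝ} (hk : ∀ a b, k a b = k b a)
    (z : (ℝ × ℝ) × (ℝ × ℝ)) : contrSqIntegrand k z.swap = contrSqIntegrand k z := by
  simp only [contrSqIntegrand, Prod.fst_swap, Prod.snd_swap]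
  rw [hk z.2.1 z.1.1, hk z.2.2 z.1.1, hk z.2.1 z.1.2, hk z.2.2 z.1.2]; ring

theorem integrable_contrSqIntegrand_comp {k : ℝ → ℝ → ℝ} (hk : Measurable (Function.uncurry k))
    {C : ℝ} (hC : ∀ a b, |k a b| ≤ C) (ρ : Measure ((ℝ × ℝ) × (ℝ × ℝ))) [IsFiniteMeasure ρ]
    {φ : (ℝ × ℝ) × (ℝ × ℝ) → (ℝ × ℝ) × (ℝ × ℝ)} (hφ : Measurable φ) :
    Integrable (fun z => contrSqIntegrand k (φ z)) ρ := by
  have hmeas : ∀ {p q : (ℝ × ℝ) × (ℝ × ℝ) → ℝ}, Measurable p → Measurable q →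
      Measurable fun z => k (p z) (q z) := fun hp hq => hk.comp (hp.prodMk hq)
  refine .of_bound
    (((hmeas (by fun_prop) (by fun_prop)).mul (hmeas (by fun_prop) (by fun_prop))).mul
      ((hmeas (by fun_prop) (by fun_prop)).mul (hmeas (by fun_prop) (by fun_prop)))
      ).aestronglyMeasurable (C * C * (C * C)) (ae_of_all _ fun z => ?_)
  have hC₀ : 0 ≤ C := (abs_nonneg _).trans (hC 0 0)
  simp only [contrSqIntegrand, norm_mul, Real.norm_eq_abs]
  gcongr <;> apply hC

theorem normSq_contr_eq_integral {T t : ℝ} (htT : t ≤ T) {k : ℝ → ℝ → ℝ}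
    (hk : ∀ a b, k a b ≠ 0 → a ∈ Set.Icc 0 t ∧ b ∈ Set.Icc 0 t)
    (hint : Integrable (contrSqIntegrand k) (volume.restrict (Set.Icc 0 t))⊗⁴) :
    normSq T (contr T k k)
      = ∫ z, contrSqIntegrand k z ∂(volume.restrict (Set.Icc 0 t))⊗⁴ := by
  have hk₁ : ∀ a ∉ Set.Icc 0 t, ∀ b, k a b = 0 := fun a ha b =>
    by_contra (ha ∘ And.left ∘ hk a b)
  have hk₂ : ∀ a, ∀ b ∉ Set.Icc 0 t, k a b = 0 := fun a b hb =>
    by_contra (hb ∘ And.right ∘ hk a b)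
  have hrestrict : ∀ {f : ℝ → ℝ}, (∀ a ∉ Set.Icc 0 t, f a = 0) →
      ∫ a in Set.Icc 0 T, f a = ∫ a in Set.Icc 0 t, f a := fun hf =>
    setIntegral_eq_of_subset_of_forall_sdiff_eq_zero measurableSet_Icc
      (Set.Icc_subset_Icc_right htT) fun a ha => hf a ha.2
  have hinner : ∀ x y, ∫ w in Set.Icc 0 T, k x w * k y w = ∫ w in Set.Icc 0 t, k x w * k y w :=
    fun x y => hrestrict fun w hw => by simp [hk₂ _ w hw]
  rw [integral_prod_prod_eq_iterated hint]
  unfold normSq ip contr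
  simp only [hinner]
  rw [hrestrict fun x hx => by simp [hk₁ x hx]]
  refine setIntegral_congr_fun measurableSet_Icc fun x _ => ?_
  rw [hrestrict fun y hy => by simp [hk₁ y hy]]
  refine setIntegral_congr_fun measurableSet_Icc fun y _ => ?_
  rw [← integral_mul_const]
  refine setIntegral_congr_fun measurableSet_Icc fun u _ => ?_
  rw [← integral_const_mul]
  rfl

theorem integral_contrSqIntegrand_eq_eight_mul {μ : Measure ℝ} [SFinite μ]
    [NullSingletonClass μ] {k : ℝ → ℝ → ℝ} (hk : ∀ a b, k a b = k b a)
    (hint : Integrable (contrSqIntegrand k) μ⊗⁴) :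
    ∫ z, contrSqIntegrand k z ∂μ⊗⁴ = 8 * ∫ z in sortedPairs, contrSqIntegrand k z ∂μ⊗⁴ := by
  have hsorted : sortedPairs = Set.univ ∩ {z | z.2.2 ≤ z.2.1} ∩ {z | z.1.2 ≤ z.1.1}
      ∩ {z | z.2.1 ≤ z.1.1} := by
    ext z; simp [sortedPairs, and_assoc]
  rw [← setIntegral_univ, hsorted,
    setIntegral_eq_two_mul_setIntegral_inter_le (g := fun z => z.2.1) (h := fun z => z.2.2)
      (.prodCongr (.refl _) .prodComm)
      ((MeasurePreserving.id _).prod Measure.measurePreserving_swap) Set.preimage_univ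
      (by fun_prop) (by fun_prop) (fun _ => rfl) (fun _ => rfl)
      (measure_setOf_fst_eq_snd_of_quasiMeasurePreserving (φ := Prod.snd) (by fun_prop))
      (contrSqIntegrand_swap_right k) hint.integrableOn,
    setIntegral_eq_two_mul_setIntegral_inter_le (g := fun z => z.1.1) (h := fun z => z.1.2)
      (.prodCongr .prodComm (.refl _))
      (Measure.measurePreserving_swap.prod (MeasurePreserving.id _)) rfl
      (by fun_prop) (by fun_prop) (fun _ => rfl) (fun _ => rfl)
      (measure_setOf_fst_eq_snd_of_quasiMeasurePreserving (φ := Prod.fst) (by fun_prop))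
      (contrSqIntegrand_swap_left k) hint.integrableOn,
    setIntegral_eq_two_mul_setIntegral_inter_le (g := fun z => z.1.1) (h := fun z => z.2.1)
      .prodComm Measure.measurePreserving_swap
      (by ext z; simp [MeasurableEquiv.prodComm, and_comm])
      (by fun_prop) (by fun_prop) (fun _ => rfl) (fun _ => rfl)
      (measure_setOf_fst_eq_snd_of_quasiMeasurePreserving (φ := Prod.map Prod.fst Prod.fst)
        (by fun_prop))
      (contrSqIntegrand_swap hk) hint.integrableOn]
  ring
section Kernel

variable {T α t : ℝ}

theorem lam_nonneg (hα : 1 / 2 < α) : 0 ≤ lam T α t :=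
  div_nonneg (abs_nonneg _) (by linarith)

theorem fker_symm (a b : ℝ) : fker T α t a b = fker T α t b a := by
  unfold fker
  rw [max_comm, min_comm]
  exact if_congr and_comm rfl rfl

theorem mem_Icc_of_fker_ne_zero (a b : ℝ) (h : fker T α t a b ≠ 0) :
    a ∈ Set.Icc 0 t ∧ b ∈ Set.Icc 0 t := by
  unfold fker at h
  split_ifs at h with hab
  exacts [hab, absurd rfl h]

theorem fker_of_le {a b : ℝ} (hb : 0 ≤ b) (hba : b ≤ a) (ha : a ≤ t) :
    fker T α t a b = 1 / (2 * √(lam T α t)) * (T - a) ^ (α - 1) * (T - b) ^ (-α) := by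
  rw [fker, if_pos ⟨⟨hb.trans hba, ha⟩, ⟨hb, hba.trans ha⟩⟩, max_eq_left hba, min_eq_right hba]

theorem fker_of_ge {a b : ℝ} (ha : 0 ≤ a) (hab : a ≤ b) (hb : b ≤ t) :
    fker T α t a b = 1 / (2 * √(lam T α t)) * (T - b) ^ (α - 1) * (T - a) ^ (-α) := by
  rw [fker_symm, fker_of_le ha hab hb]

theorem measurable_fker : Measurable (Function.uncurry (fker T α t)) := by
  unfold fker Function.uncurry
  exact Measurable.ite
    ((measurable_fst measurableSet_Icc).inter (measurable_snd measurableSet_Icc))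
    (by fun_prop) measurable_const

theorem exists_abs_fker_le (htT : t < T) : ∃ C, ∀ a b, |fker T α t a b| ≤ C := by
  have hpos : ∀ p ∈ Set.Icc 0 t ×ˢ Set.Icc 0 t, T - max p.1 p.2 ≠ 0 ∧ T - min p.1 p.2 ≠ 0 :=
    fun p hp => ⟨by linarith [max_le hp.1.2 hp.2.2], by linarith [min_le_left p.1 p.2, hp.1.2]⟩
  have hcont : ContinuousOn (fun p : ℝ × ℝ => 1 / (2 * √(lam T α t))
      * (T - max p.1 p.2) ^ (α - 1) * (T - min p.1 p.2) ^ (-α)) (Set.Icc 0 t ×ˢ Set.Icc 0 t) :=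
    (continuousOn_const.mul ((by fun_prop : Continuous fun p : ℝ × ℝ => T - max p.1 p.2)
      |>.continuousOn.rpow_const fun p hp => .inl (hpos p hp).1)).mul
      ((by fun_prop : Continuous fun p : ℝ × ℝ => T - min p.1 p.2)
      |>.continuousOn.rpow_const fun p hp => .inl (hpos p hp).2)
  obtain ⟨C, hC⟩ := (isCompact_Icc.prod isCompact_Icc).exists_bound_of_continuousOn hcont
  refine ⟨max C 0, fun a b => ?_⟩
  unfold fker
  split_ifs with hab
  · exact (hC (a, b) hab).trans (le_max_left _ _)
  · simp

theorem contrSqIntegrand_fker_xyuv (htT : t < T) {x y u v : ℝ} (hv : 0 ≤ v) (hvu : v ≤ u)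
    (huy : u ≤ y) (hyx : y ≤ x) (hxt : x ≤ t) :
    contrSqIntegrand (fker T α t) ((x, y), (u, v)) = (1 / (2 * √(lam T α t))) ^ 4 *
      ((T - x) ^ (2 * α - 2) * (T - y) ^ (2 * α - 2) * (T - u) ^ (-(2 * α))
        * (T - v) ^ (-(2 * α))) := by
  have hu : 0 ≤ u := hv.trans hvu
  simp only [contrSqIntegrand]
  rw [fker_of_le hu (by linarith) hxt, fker_of_le hu huy (by linarith),
    fker_of_le hv (by linarith) hxt, fker_of_le hv (by linarith) (by linarith),
    show 2 * α - 2 = (α - 1) + (α - 1) by ring, show -(2 * α) = -α + -α by ring,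
    rpow_add (by linarith : 0 < T - x), rpow_add (by linarith : 0 < T - y),
    rpow_add (by linarith : 0 < T - u), rpow_add (by linarith : 0 < T - v)]
  ring

theorem contrSqIntegrand_fker_xuyv (htT : t < T) {x y u v : ℝ} (hv : 0 ≤ v) (hvu : v ≤ u)
    (huy : u ≤ y) (hyx : y ≤ x) (hxt : x ≤ t) :
    contrSqIntegrand (fker T α t) ((x, u), (y, v)) = (1 / (2 * √(lam T α t))) ^ 4 *
      ((T - x) ^ (2 * α - 2) * (T - y) ^ (-1 : ℝ) * (T - u) ^ (-1 : ℝ)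
        * (T - v) ^ (-(2 * α))) := by
  have hu : 0 ≤ u := hv.trans hvu
  simp only [contrSqIntegrand]
  rw [fker_of_le (by linarith) hyx hxt, fker_of_ge hu huy (by linarith),
    fker_of_le hv (by linarith) hxt, fker_of_le hv hvu (by linarith),
    show 2 * α - 2 = (α - 1) + (α - 1) by ring, show (-1 : ℝ) = -α + (α - 1) by ring,
    show -(2 * α) = -α + -α by ring,
    rpow_add (by linarith : 0 < T - x), rpow_add (by linarith : 0 < T - y),
    rpow_add (by linarith : 0 < T - u), rpow_add (by linarith : 0 < T - v)]
  ring

theorem contrSqIntegrand_fker_xvyu (htT : t < T) {x y u v : ℝ} (hv : 0 ≤ v) (hvu : v ≤ u)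
    (huy : u ≤ y) (hyx : y ≤ x) (hxt : x ≤ t) :
    contrSqIntegrand (fker T α t) ((x, v), (y, u)) = (1 / (2 * √(lam T α t))) ^ 4 *
      ((T - x) ^ (2 * α - 2) * (T - y) ^ (-1 : ℝ) * (T - u) ^ (-1 : ℝ)
        * (T - v) ^ (-(2 * α))) := by
  have hu : 0 ≤ u := hv.trans hvu
  simp only [contrSqIntegrand]
  rw [fker_of_le (by linarith) hyx hxt, fker_of_ge hv (by linarith) (by linarith),
    fker_of_le hu (by linarith) hxt, fker_of_ge hv hvu (by linarith),
    show 2 * α - 2 = (α - 1) + (α - 1) by ring, show (-1 : ℝ) = -α + (α - 1) by ring,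
    show -(2 * α) = -α + -α by ring,
    rpow_add (by linarith : 0 < T - x), rpow_add (by linarith : 0 < T - y),
    rpow_add (by linarith : 0 < T - u), rpow_add (by linarith : 0 < T - v)]
  ring

end Kernel

theorem one_div_two_mul_sqrt_pow_four {x : ℝ} (hx : 0 ≤ x) :
    (1 / (2 * √x)) ^ 4 = 1 / (16 * x ^ 2) := by
  rw [div_pow, mul_pow, show √x ^ 4 = x ^ 2 by rw [show 4 = 2 * 2 from rfl, pow_mul, sq_sqrt hx]]
  norm_num

theorem stmt_6_general (T α : ℝ) (hα : 1 / 2 < α)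
    (t : ℝ) (ht1 : max 0 (T - 1 / Real.exp 1) < t) (ht2 : t < T) :
    normSq T (contr T (fker T α t) (fker T α t)) = A1 T α t + A2 T α t := by
  set μ := volume.restrict (Set.Icc (0 : ℝ) t)
  have ht : 0 ≤ t := (le_max_left _ _).trans ht1.le
  obtain ⟨C, hC⟩ := exists_abs_fker_le (α := α) ht2
  have hint₁ : Integrable (contrSqIntegrand (fker T α t)) μ⊗⁴ :=
    integrable_contrSqIntegrand_comp measurable_fker hC _ measurable_id
  have hint₂ : Integrable
      (fun z => contrSqIntegrand (fker T α t) ((z.1.1, z.2.1), (z.1.2, z.2.2))) μ⊗⁴ :=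
    integrable_contrSqIntegrand_comp measurable_fker hC _ (by fun_prop)
  have hint₃ : Integrable
      (fun z => contrSqIntegrand (fker T α t) ((z.1.1, z.2.2), (z.1.2, z.2.1))) μ⊗⁴ :=
    integrable_contrSqIntegrand_comp measurable_fker hC _ (by fun_prop)
  rw [normSq_contr_eq_integral ht2.le mem_Icc_of_fker_ne_zero hint₁,
    integral_contrSqIntegrand_eq_eight_mul fker_symm hint₁, setIntegral_sortedPairs hint₁,
    setIntegral_antitoneQuadruples ht hint₁ _ fun _ _ _ _ => contrSqIntegrand_fker_xyuv ht2,
    setIntegral_antitoneQuadruples ht hint₂ _ fun _ _ _ _ => contrSqIntegrand_fker_xuyv ht2,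
    setIntegral_antitoneQuadruples ht hint₃ _ fun _ _ _ _ => contrSqIntegrand_fker_xvyu ht2]
  unfold A1 A2
  simp only [intervalIntegral.integral_const_mul]
  rw [one_div_two_mul_sqrt_pow_four (lam_nonneg hα)]
  ring

theorem stmt_6 (T α : ℝ) (hT : 0 < T) (hα : 1 / 2 < α)
    (t : ℝ) (ht1 : max 0 (T - 1 / Real.exp 1) < t) (ht2 : t < T) :
    normSq T (contr T (fker T α t) (fker T α t)) = A1 T α t + A2 T α t :=
  stmt_6_general T α hα t ht1 ht2
end

section
/- As t ↑ T, λ_t · A_{t,1} converges to 1/(2α−1)², where A_{t,1} := (1/λ_t²)·∫_{0<x₁<x₂<x₃<x₄<t} (T−x₄)^{2α−2}(T−x₃)^{−1}(T−x₂)^{−1}(T−x₁)^{−2α} dx₁dx₂dx₃dx₄; equivalently, A_{t,1} = 1/((2α−1)²λ_t) + o(1/λ_t). -/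
open MeasureTheory Real Filter Topology

/-! Substitute `s = (2α - 1) log (T / (T - x))` (`logScale`). Each factor `(T - x)⁻¹ dx` becomes
`ds / (2α - 1)`, while `(T - x)^(-2α) dx` and `(T - x)^(2α - 2) dx` become `e^s` and `e^(-s)` up to
constants. The three inner integrals are then the Taylor remainders `e^s - ∑_{k<n} s^k/k!`
(`expTail n`), and the whole integral is `H(s_t) / (2α - 1)^4` with
`H(s) = ∫₀ˢ e^(-r) (e^r - 1 - r - r²/2) dr = s - 3 + e^(-s) (3 + 2s + s²/2)`.
Since `H(s) - s → -3` and `s_t = (2α - 1)(log T + |log (T - t)|)`, dividing by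
`λ_t = |log (T - t)| / (2α - 1)` gives the limit `1 / (2α - 1)^2`. -/

theorem lt_of_mem_uIcc {a b c x : ℝ} (ha : a < c) (hb : b < c) (hx : x ∈ Set.uIcc a b) : x < c :=
  (Set.mem_uIcc.1 hx).elim (fun h => h.2.trans_lt hb) (fun h => h.2.trans_lt ha)

noncomputable def expTail (n : ℕ) (s : ℝ) : ℝ :=
  exp s - ∑ k ∈ Finset.range n, s ^ k / k.factorial

theorem hasDerivAt_sum_range_pow_div_factorial (n : ℕ) (s : ℝ) :
    HasDerivAt (fun s : ℝ => ∑ k ∈ Finset.range (n + 1), s ^ k / k.factorial)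
      (∑ k ∈ Finset.range n, s ^ k / k.factorial) s := by
  induction n with
  | zero => simpa using hasDerivAt_const s (1 : ℝ)
  | succ n ih =>
    simp only [Finset.sum_range_succ _ (n + 1)]
    refine (ih.fun_add ((hasDerivAt_pow (n + 1) s).div_const ((n + 1).factorial : ℝ)))
      |>.congr_deriv ?_
    rw [Finset.sum_range_succ _ n, Nat.factorial_succ]
    push_cast
    field_simp

theorem hasDerivAt_expTail_succ (n : ℕ) (s : ℝ) :
    HasDerivAt (expTail (n + 1)) (expTail n s) s :=
  (Real.hasDerivAt_exp s).sub (hasDerivAt_sum_range_pow_div_factorial n s)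

theorem continuous_expTail (n : ℕ) : Continuous (expTail n) := by
  unfold expTail
  fun_prop

@[simp]
theorem expTail_succ_zero (n : ℕ) : expTail (n + 1) 0 = 0 := by
  simp [expTail, Finset.sum_range_succ']

@[simp]
theorem expTail_zero : expTail 0 = exp := by
  ext s
  simp [expTail]

noncomputable def expTailIntegral (s : ℝ) : ℝ :=
  s - 3 + exp (-s) * (3 + 2 * s + s ^ 2 / 2)

@[simp]
theorem expTailIntegral_zero : expTailIntegral 0 = 0 := by
  norm_num [expTailIntegral]

theorem hasDerivAt_expTailIntegral (s : ℝ) :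
    HasDerivAt expTailIntegral (exp (-s) * expTail 3 s) s := by
  have h := ((hasDerivAt_id' s).sub_const 3).add ((hasDerivAt_neg' s).exp.mul
    ((((hasDerivAt_id' s).const_mul 2).const_add 3).add ((hasDerivAt_pow 2 s).div_const 2)))
  refine h.congr_deriv ?_
  simp only [expTail, Finset.sum_range_succ, Finset.sum_range_zero]
  rw [mul_sub, ← Real.exp_add, neg_add_cancel, Real.exp_zero]
  norm_num
  ring

theorem tendsto_expTailIntegral_sub_self :
    Tendsto (fun s => expTailIntegral s - s) atTop (𝓝 (-3)) := by
  have h := fun n => Real.tendsto_pow_mul_exp_neg_atTop_nhds_zero n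
  have := ((((h 0).const_mul 3).add ((h 1).const_mul 2)).add ((h 2).div_const 2)).const_add (-3)
  simp only [mul_zero, add_zero, zero_div] at this
  refine this.congr fun s => ?_
  simp only [expTailIntegral]
  ring

theorem tendsto_expTailIntegral_div_atTop {p : ℝ} (hp : 0 < p) (c : ℝ) :
    Tendsto (fun l => expTailIntegral (p * (c + l)) / (p ^ 3 * l)) atTop (𝓝 (1 / p ^ 2)) := by
  have hscale : Tendsto (fun l => p * (c + l)) atTop atTop :=
    (tendsto_atTop_add_const_left _ c tendsto_id).const_mul_atTop hp
  have hinv : Tendsto (fun l : ℝ => l⁻¹) atTop (𝓝 0) := tendsto_inv_atTop_zero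
  have h := (((tendsto_expTailIntegral_sub_self.comp hscale).mul hinv).div_const (p ^ 3)).add
    (((hinv.const_mul c).add_const 1).div_const (p ^ 2))
  rw [mul_zero, zero_div, mul_zero, zero_add, zero_add] at h
  refine h.congr' ?_
  filter_upwards [eventually_gt_atTop 0] with l hl
  simp only [Function.comp_apply]
  field_simp
  ring

noncomputable def logScale (T p x : ℝ) : ℝ := p * (log T - log (T - x))

section logScale

variable {T p : ℝ}

@[simp]
theorem logScale_zero : logScale T p 0 = 0 := by simp [logScale]

theorem hasDerivAt_logScale {x : ℝ} (hx : x < T) :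
    HasDerivAt (logScale T p) (p * (T - x)⁻¹) x := by
  have h := ((Real.hasDerivAt_log (sub_pos.2 hx).ne').comp x
    ((hasDerivAt_id' x).const_sub T)).const_sub (log T) |>.const_mul p
  refine h.congr_deriv ?_
  simp

theorem rpow_eq_mul_exp_neg_logScale (hT : 0 < T) {x : ℝ} (hx : x < T) :
    (T - x) ^ p = T ^ p * exp (-logScale T p x) := by
  rw [Real.rpow_def_of_pos (sub_pos.2 hx), Real.rpow_def_of_pos hT, ← Real.exp_add, logScale]
  ring_nf

theorem rpow_neg_eq_mul_exp_logScale (hT : 0 < T) {x : ℝ} (hx : x < T) :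
    (T - x) ^ (-p) = T ^ (-p) * exp (logScale T p x) := by
  rw [Real.rpow_neg (sub_pos.2 hx).le, Real.rpow_neg hT.le, rpow_eq_mul_exp_neg_logScale hT hx,
    mul_inv, Real.exp_neg, inv_inv]

theorem integral_inv_mul_comp_logScale {g G : ℝ → ℝ} (hG : ∀ s, HasDerivAt G (g s) s)
    (hg : Continuous g) (hp : p ≠ 0) (hT : 0 < T) {b : ℝ} (hb : b < T) :
    ∫ x in (0:ℝ)..b, (T - x)⁻¹ * g (logScale T p x) = (G (logScale T p b) - G 0) / p := by
  rw [intervalIntegral.integral_eq_sub_of_hasDerivAt (f := fun x => G (logScale T p x) / p)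
    (fun x hx => ?_) (ContinuousOn.intervalIntegrable fun x hx => ?_)]
  · simp [sub_div]
  · have hx' := lt_of_mem_uIcc hT hb hx
    refine ((hG _).comp x (hasDerivAt_logScale hx')).div_const p |>.congr_deriv ?_
    field_simp
  · have hx' := lt_of_mem_uIcc hT hb hx
    exact (((continuousAt_const.sub continuousAt_id).inv₀ (sub_pos.2 hx').ne').mul
      (hg.continuousAt.comp (hasDerivAt_logScale hx').continuousAt)).continuousWithinAt

end logScale

section iterated

variable {T p : ℝ}

theorem integral_inv_mul_eq_expTail_succ (hp : p ≠ 0) (hT : 0 < T) {F : ℝ → ℝ} (k : ℕ) (c : ℝ)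
    (hF : ∀ x < T, F x = c * expTail k (logScale T p x)) {b : ℝ} (hb : b < T) :
    ∫ x in (0:ℝ)..b, (T - x)⁻¹ * F x = c * expTail (k + 1) (logScale T p b) / p := by
  rw [intervalIntegral.integral_congr (g := fun x => (T - x)⁻¹ * (c * expTail k (logScale T p x)))
    fun x hx => by simp only [hF x (lt_of_mem_uIcc hT hb hx)]]
  simpa using integral_inv_mul_comp_logScale (fun s => (hasDerivAt_expTail_succ k s).const_mul c)
    (continuous_const.mul (continuous_expTail k)) hp hT hb

theorem iteratedIntegral_eq_expTailIntegral (hT : 0 < T) (hp : p ≠ 0) {t : ℝ} (ht : t < T) :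
    ∫ x4 in (0:ℝ)..t, ∫ x3 in (0:ℝ)..x4, ∫ x2 in (0:ℝ)..x3, ∫ x1 in (0:ℝ)..x2,
      (T - x4) ^ (p - 1) * (T - x3) ^ (-1 : ℝ) * (T - x2) ^ (-1 : ℝ) * (T - x1) ^ (-p - 1)
    = expTailIntegral (logScale T p t) / p ^ 4 := by
  simp only [mul_assoc, intervalIntegral.integral_const_mul, Real.rpow_neg_one]
  have level1 : ∀ b < T, ∫ x in (0:ℝ)..b, (T - x) ^ (-p - 1)
      = T ^ (-p) * expTail 1 (logScale T p b) / p := fun b hb => by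
    rw [← integral_inv_mul_eq_expTail_succ hp hT 0 _ (fun _ _ => rfl) hb]
    refine intervalIntegral.integral_congr fun x hx => ?_
    have hx' := lt_of_mem_uIcc hT hb hx
    simp only [Real.rpow_sub_one (sub_pos.2 hx').ne', rpow_neg_eq_mul_exp_logScale hT hx',
      expTail_zero]
    ring
  have level2 := fun b (hb : b < T) => integral_inv_mul_eq_expTail_succ hp hT
    (F := fun x => ∫ y in (0:ℝ)..x, (T - y) ^ (-p - 1)) 1 (T ^ (-p) / p)
    (fun x hx => by rw [level1 x hx]; ring) hb
  have level3 := fun b (hb : b < T) => integral_inv_mul_eq_expTail_succ hp hT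
    (F := fun x => ∫ y in (0:ℝ)..x, (T - y)⁻¹ * ∫ z in (0:ℝ)..y, (T - z) ^ (-p - 1)) 2
    (T ^ (-p) / p / p) (fun x hx => by rw [level2 x hx]; ring) hb
  rw [intervalIntegral.integral_congr (g := fun x => (T - x)⁻¹ *
    (1 / p ^ 3 * (exp (-logScale T p x) * expTail 3 (logScale T p x)))) fun x hx => ?_]
  · rw [integral_inv_mul_comp_logScale
      (fun s => (hasDerivAt_expTailIntegral s).const_mul (1 / p ^ 3))
      (continuous_const.mul (continuous_neg.rexp.mul (continuous_expTail 3))) hp hT ht,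
      expTailIntegral_zero]
    ring
  have hx' := lt_of_mem_uIcc hT ht hx
  simp only [level3 x hx', Real.rpow_sub_one (sub_pos.2 hx').ne',
    rpow_eq_mul_exp_neg_logScale hT hx']
  rw [Real.rpow_neg hT.le]
  field_simp

end iterated

theorem tendsto_neg_log_sub_nhdsLT (T : ℝ) :
    Tendsto (fun t => -log (T - t)) (𝓝[<] T) atTop := by
  have hgap : Tendsto (fun t => T - t) (𝓝[<] T) (𝓝[>] 0) := by
    refine tendsto_nhdsWithin_of_tendsto_nhds_of_eventually_within _ ?_ ?_
    · simpa using ((continuous_sub_left T).tendsto T).mono_left nhdsWithin_le_nhds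
    · filter_upwards [self_mem_nhdsWithin] with t (ht : t < T) using sub_pos.2 ht
  exact tendsto_neg_atBot_atTop.comp (tendsto_log_nhdsGT_zero.comp hgap)

theorem lam_mul_A1_eq {T α t : ℝ} (hT : 0 < T) (hp : 2 * α - 1 ≠ 0) (ht : T - 1 < t)
    (htT : t < T) :
    lam T α t * A1 T α t = expTailIntegral ((2 * α - 1) * (log T + -log (T - t)))
      / ((2 * α - 1) ^ 3 * -log (T - t)) := by
  have hlog : log (T - t) < 0 := Real.log_neg (by linarith) (by linarith)
  have hI := iteratedIntegral_eq_expTailIntegral hT hp htT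
  rw [show 2 * α - 1 - 1 = 2 * α - 2 by ring, show -(2 * α - 1) - 1 = -(2 * α) by ring] at hI
  rw [A1, hI, lam, abs_of_neg hlog, logScale, ← sub_eq_add_neg]
  field_simp

theorem stmt_7 (T α : ℝ) (hT : 0 < T) (hα : 1 / 2 < α) :
    Tendsto (fun t => lam T α t * A1 T α t)
      (𝓝[<] T) (𝓝 (1 / (2 * α - 1) ^ 2)) := by
  have hp : 0 < 2 * α - 1 := by linarith
  refine ((tendsto_expTailIntegral_div_atTop hp (log T)).comp
    (tendsto_neg_log_sub_nhdsLT T)).congr' ?_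
  filter_upwards [Ioo_mem_nhdsLT (show T - 1 < T by linarith)] with t ⟨ht, htT⟩
  exact (lam_mul_A1_eq hT hp.ne' ht htT).symm
end

section
/- As t ↑ T, λ_t · A_{t,2} converges to 1/(4(2α−1)²), where A_{t,2} := (1/(2λ_t²))·∫_{0<x₁<x₃<x₂<x₄<t} (T−x₄)^{2α−2}(T−x₂)^{2α−2}(T−x₃)^{−2α}(T−x₁)^{−2α} dx₁dx₃dx₂dx₄; equivalently, A_{t,2} = 1/(4(2α−1)²λ_t) + o(1/λ_t). -/
open MeasureTheory Real Filter Topology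

open Set

/-!
Write `b = 2α - 1` and substitute `u = T - x`. The quadruple integral is computed in closed form
by four successive explicit primitives; the outermost one, `prim₄ T b`, is `-log u / (2b³)` plus
multiples of `u ^ b`, `u ^ b * log u` and `u ^ (2b)`, which vanish as `u → 0⁺`. Since
`λ_t = -log (T - t) / b` for `t` close to `T`, this gives
`λ_t A_{t,2} = b / 2 · (prim₄ (T - t) - prim₄ T) / (-log (T - t)) → b / 2 · 1 / (2b³)`.
-/

lemma rpow_two_mul {x : ℝ} (hx : 0 ≤ x) (y : ℝ) : x ^ (2 * y) = (x ^ y) ^ 2 := by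
  rw [mul_comm]
  exact_mod_cast rpow_mul_natCast hx y 2

variable {T b u : ℝ}

lemma hasDerivAt_rpow_const_of_pos (p : ℝ) (hu : 0 < u) :
    HasDerivAt (fun x => x ^ p) (p * u ^ (p - 1)) u :=
  hasDerivAt_rpow_const (Or.inl hu.ne')

lemma continuousOn_rpow_const_Ioi (p : ℝ) : ContinuousOn (fun u : ℝ => u ^ p) (Ioi 0) :=
  continuousOn_id.rpow_const fun _ hu => Or.inl (ne_of_gt hu)

theorem integral_comp_sub_eq_of_hasDerivAt {Q q : ℝ → ℝ} {s : ℝ}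
    (hQ : ∀ u > 0, HasDerivAt Q (-q u) u) (hq : ContinuousOn q (Ioi 0)) (hT : 0 < T)
    (hs : s < T) : ∫ x in (0 : ℝ)..s, q (T - x) = Q (T - s) - Q T := by
  have hsub : uIcc (T - s) T ⊆ Ioi 0 := fun u hu =>
    lt_of_lt_of_le (lt_min (sub_pos.2 hs) hT) hu.1
  have h := intervalIntegral.integral_eq_sub_of_hasDerivAt (fun u hu => hQ u (hsub hu))
    (hq.mono hsub).neg.intervalIntegrable
  rw [intervalIntegral.integral_neg] at h
  rw [intervalIntegral.integral_comp_sub_left, sub_zero]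
  linarith

theorem integral_mul_eq_of_hasDerivAt {w F G g : ℝ → ℝ} {s : ℝ}
    (hg : ∀ x < T, g x = F (T - x) - F T)
    (hG : ∀ u > 0, HasDerivAt G (-(w u * (F u - F T))) u)
    (hw : ContinuousOn w (Ioi 0)) (hF : ∀ u > 0, ContinuousAt F u) (hT : 0 < T) (hs : s < T) :
    ∫ x in (0 : ℝ)..s, w (T - x) * g x = G (T - s) - G T := by
  have hcont : ContinuousOn (fun u => w u * (F u - F T)) (Ioi 0) :=
    hw.mul ((continuousOn_of_forall_continuousAt hF).sub continuousOn_const)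
  rw [← integral_comp_sub_eq_of_hasDerivAt hG hcont hT hs]
  refine intervalIntegral.integral_congr fun x hx => ?_
  rw [hg x (lt_of_le_of_lt hx.2 (max_lt hT hs))]

/- `primₖ T b (T - s) - primₖ T b T` is the `k`-fold inner integral of `A2`'s integrand over
`0 < x < s`, with `2α - 2 = b - 1` and `-2α = -(b + 1)` (see `iteratedIntegral_eq_prim₄`). -/
noncomputable def prim₁ (b u : ℝ) : ℝ := u ^ (-b) / b

noncomputable def prim₂ (T b u : ℝ) : ℝ :=
  u ^ (-(2 * b)) / (2 * b ^ 2) - T ^ (-b) * u ^ (-b) / b ^ 2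

noncomputable def prim₃ (T b u : ℝ) : ℝ :=
  u ^ (-b) / (2 * b ^ 3) + T ^ (-b) * log u / b ^ 2 - T ^ (-(2 * b)) * u ^ b / (2 * b ^ 3)

noncomputable def prim₄ (T b u : ℝ) : ℝ :=
  -log u / (2 * b ^ 3) + T ^ (-b) / b ^ 2 * (u ^ b / b ^ 2 - u ^ b * log u / b)
    + T ^ (-(2 * b)) / (4 * b ^ 4) * u ^ (2 * b) + T ^ (-b) * log T / b ^ 3 * u ^ b

theorem hasDerivAt_prim₁ (hb : b ≠ 0) (hu : 0 < u) :
    HasDerivAt (prim₁ b) (-u ^ (-(b + 1))) u := by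
  refine ((hasDerivAt_rpow_const_of_pos (-b) hu).div_const b).congr_deriv ?_
  rw [neg_add', rpow_sub_one hu.ne']
  field_simp

theorem hasDerivAt_prim₂ (hb : b ≠ 0) (hu : 0 < u) :
    HasDerivAt (prim₂ T b) (-(u ^ (-(b + 1)) * (prim₁ b u - prim₁ b T))) u := by
  refine (((hasDerivAt_rpow_const_of_pos _ hu).div_const (2 * b ^ 2)).sub
    (((hasDerivAt_rpow_const_of_pos (-b) hu).const_mul (T ^ (-b))).div_const
      (b ^ 2))).congr_deriv ?_
  simp only [prim₁, rpow_sub_one hu.ne', rpow_add_one hu.ne', rpow_neg hu.le, rpow_two_mul hu.le]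
  field_simp
  ring

theorem hasDerivAt_prim₃ (hT : 0 < T) (hb : b ≠ 0) (hu : 0 < u) :
    HasDerivAt (prim₃ T b) (-(u ^ (b - 1) * (prim₂ T b u - prim₂ T b T))) u := by
  refine ((((hasDerivAt_rpow_const_of_pos (-b) hu).div_const (2 * b ^ 3)).add
    (((hasDerivAt_log hu.ne').const_mul (T ^ (-b))).div_const (b ^ 2))).sub
    (((hasDerivAt_rpow_const_of_pos b hu).const_mul (T ^ (-(2 * b)))).div_const
      (2 * b ^ 3))).congr_deriv ?_
  simp only [prim₂, rpow_sub_one hu.ne', rpow_neg hu.le, rpow_neg hT.le, rpow_two_mul hu.le,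
    rpow_two_mul hT.le]
  field_simp
  ring

theorem hasDerivAt_prim₄ (hT : 0 < T) (hb : b ≠ 0) (hu : 0 < u) :
    HasDerivAt (prim₄ T b) (-(u ^ (b - 1) * (prim₃ T b u - prim₃ T b T))) u := by
  have hlog := hasDerivAt_log hu.ne'
  have hpow := hasDerivAt_rpow_const_of_pos b hu
  refine ((((hlog.neg.div_const (2 * b ^ 3)).add (((hpow.div_const (b ^ 2)).sub
    ((hpow.mul hlog).div_const b)).const_mul (T ^ (-b) / b ^ 2))).add
    ((hasDerivAt_rpow_const_of_pos (2 * b) hu).const_mul (T ^ (-(2 * b)) / (4 * b ^ 4)))).add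
    (hpow.const_mul (T ^ (-b) * log T / b ^ 3))).congr_deriv ?_
  simp only [prim₃, rpow_sub_one hu.ne', rpow_neg hu.le, rpow_neg hT.le, rpow_two_mul hu.le,
    rpow_two_mul hT.le]
  field_simp
  ring

theorem iteratedIntegral_eq_prim₄ (hT : 0 < T) (hb : b ≠ 0) {t : ℝ} (ht : t < T) :
    ∫ x₄ in (0 : ℝ)..t, ∫ x₂ in (0 : ℝ)..x₄, ∫ x₃ in (0 : ℝ)..x₂, ∫ x₁ in (0 : ℝ)..x₃,
      (T - x₄) ^ (b - 1) * (T - x₂) ^ (b - 1) * (T - x₃) ^ (-(b + 1)) * (T - x₁) ^ (-(b + 1))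
      = prim₄ T b (T - t) - prim₄ T b T := by
  have h₁ : ∀ s < T, ∫ x in (0 : ℝ)..s, (T - x) ^ (-(b + 1)) = prim₁ b (T - s) - prim₁ b T :=
    fun s hs => integral_comp_sub_eq_of_hasDerivAt (fun u hu => hasDerivAt_prim₁ hb hu)
      (continuousOn_rpow_const_Ioi _) hT hs
  have h₂ : ∀ s < T, ∫ x in (0 : ℝ)..s, (T - x) ^ (-(b + 1)) *
      ∫ x₁ in (0 : ℝ)..x, (T - x₁) ^ (-(b + 1)) = prim₂ T b (T - s) - prim₂ T b T :=
    fun s hs => integral_mul_eq_of_hasDerivAt h₁ (fun u hu => hasDerivAt_prim₂ hb hu)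
      (continuousOn_rpow_const_Ioi _) (fun u hu => (hasDerivAt_prim₁ hb hu).continuousAt) hT hs
  have h₃ : ∀ s < T, ∫ x in (0 : ℝ)..s, (T - x) ^ (b - 1) * ∫ x₃ in (0 : ℝ)..x,
      (T - x₃) ^ (-(b + 1)) * ∫ x₁ in (0 : ℝ)..x₃, (T - x₁) ^ (-(b + 1))
      = prim₃ T b (T - s) - prim₃ T b T :=
    fun s hs => integral_mul_eq_of_hasDerivAt h₂ (fun u hu => hasDerivAt_prim₃ hT hb hu)
      (continuousOn_rpow_const_Ioi _) (fun u hu => (hasDerivAt_prim₂ hb hu).continuousAt) hT hs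
  have h₄ : ∀ s < T, ∫ x in (0 : ℝ)..s, (T - x) ^ (b - 1) * ∫ x₂ in (0 : ℝ)..x,
      (T - x₂) ^ (b - 1) * ∫ x₃ in (0 : ℝ)..x₂,
      (T - x₃) ^ (-(b + 1)) * ∫ x₁ in (0 : ℝ)..x₃, (T - x₁) ^ (-(b + 1))
      = prim₄ T b (T - s) - prim₄ T b T :=
    fun s hs => integral_mul_eq_of_hasDerivAt h₃ (fun u hu => hasDerivAt_prim₄ hT hb hu)
      (continuousOn_rpow_const_Ioi _) (fun u hu => (hasDerivAt_prim₃ hT hb hu).continuousAt) hT hs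
  simpa only [mul_assoc, intervalIntegral.integral_const_mul] using h₄ t ht

theorem tendsto_prim₄_add_log (T : ℝ) (hb : 0 < b) :
    Tendsto (fun u => prim₄ T b u + log u / (2 * b ^ 3)) (𝓝[>] 0) (𝓝 0) := by
  have hpow : ∀ {p : ℝ}, 0 < p → Tendsto (fun u : ℝ => u ^ p) (𝓝[>] 0) (𝓝 0) := fun hp => by
    simpa [zero_rpow hp.ne'] using
      (continuousAt_rpow_const 0 _ (Or.inr hp.le)).tendsto.mono_left nhdsWithin_le_nhds
  have hpow_log : Tendsto (fun u => u ^ b * log u) (𝓝[>] 0) (𝓝 0) := by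
    simpa only [mul_comm] using tendsto_log_mul_rpow_nhdsGT_zero hb
  have h := (((((hpow hb).div_const (b ^ 2)).sub (hpow_log.div_const b)).const_mul
      (T ^ (-b) / b ^ 2)).add
    ((hpow (by positivity : 0 < 2 * b)).const_mul (T ^ (-(2 * b)) / (4 * b ^ 4)))).add
    ((hpow hb).const_mul (T ^ (-b) * log T / b ^ 3))
  simp only [zero_div, sub_zero, mul_zero, add_zero] at h
  refine h.congr fun u => ?_
  simp only [prim₄]
  ring

theorem tendsto_prim₄_sub_div_neg_log (T : ℝ) (hb : 0 < b) (c : ℝ) :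
    Tendsto (fun u => (prim₄ T b u - c) / -log u) (𝓝[>] 0) (𝓝 (1 / (2 * b ^ 3))) := by
  have hinv : Tendsto (fun u => (-log u)⁻¹) (𝓝[>] 0) (𝓝 0) :=
    tendsto_inv_atTop_zero.comp (tendsto_neg_atBot_atTop.comp tendsto_log_nhdsGT_zero)
  have h := ((tendsto_prim₄_add_log T hb).sub_const c).mul hinv |>.const_add (1 / (2 * b ^ 3))
  rw [mul_zero, add_zero] at h
  refine h.congr' ?_
  filter_upwards [Ioo_mem_nhdsGT one_pos] with u hu
  have : log u ≠ 0 := (log_neg hu.1 hu.2).ne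
  field_simp
  ring

theorem lam_mul_A2_eq {α t : ℝ} (hT : 0 < T) (hb : 2 * α - 1 ≠ 0) (ht₁ : T - 1 < t) (ht : t < T) :
    lam T α t * A2 T α t = (2 * α - 1) / 2 *
      ((prim₄ T (2 * α - 1) (T - t) - prim₄ T (2 * α - 1) T) / -log (T - t)) := by
  have hlog : log (T - t) < 0 := log_neg (by linarith) (by linarith)
  simp only [A2, lam, abs_of_neg hlog, show 2 * α - 2 = 2 * α - 1 - 1 by ring,
    show -(2 * α) = -(2 * α - 1 + 1) by ring, iteratedIntegral_eq_prim₄ hT hb ht]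
  field_simp [hlog.ne]

theorem stmt_8 (T α : ℝ) (hT : 0 < T) (hα : 1 / 2 < α) :
    Tendsto (fun t => lam T α t * A2 T α t)
      (𝓝[<] T) (𝓝 (1 / (4 * (2 * α - 1) ^ 2))) := by
  have hb : 0 < 2 * α - 1 := by linarith
  have hu : Tendsto (fun t => T - t) (𝓝[<] T) (𝓝[>] 0) :=
    tendsto_nhdsWithin_iff.2
      ⟨((continuous_const.sub continuous_id).tendsto' T 0 (sub_self T)).mono_left
        nhdsWithin_le_nhds,
        eventually_nhdsWithin_of_forall fun _ ht => sub_pos.2 (mem_Iio.1 ht)⟩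
  have h := ((tendsto_prim₄_sub_div_neg_log T hb (prim₄ T (2 * α - 1) T)).comp hu).const_mul
    ((2 * α - 1) / 2)
  rw [show (2 * α - 1) / 2 * (1 / (2 * (2 * α - 1) ^ 3)) = 1 / (4 * (2 * α - 1) ^ 2) by
    field_simp; ring] at h
  refine h.congr' ?_
  filter_upwards [Ioo_mem_nhdsLT (by linarith : T - 1 < T)] with t ht
  exact (lam_mul_A2_eq hT hb.ne' ht.1 ht.2).symm
end

section
/- There exists a constant C > 0, depending only on α and T, such that for every t with max(0, T − 1/e) < t < T one has ‖g_t ⊗₁ g_t‖ ≤ C/λ_t^{3/2}. -/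
open MeasureTheory Real Filter Topology

/-!
Put `a = T - x`, `b = T - y`, `w = T - u` and `ρ(a, b) = min a b / max a b`. Dropping the
subtracted term in `g_t` gives `g_t(x, u) ≤ (a w)^{-1/2} ρ(a, w)^β / |log(T - t)|` with
`β = α - 1/2`. Since `ρ(a, w) ρ(w, b) ≤ ρ(a, b)`, the product `ρ(a, w)^β ρ(b, w)^β` is at most
`ρ(a, w)^{β/2} ρ(a, b)^{β/2}`, and `∫ w⁻¹ ρ(a, w)^γ dw ≤ 2/γ` uniformly in `a`. So
`(g_t ⊗₁ g_t)(x, y) ≲ (a b)^{-1/2} ρ(a, b)^{β/2} / log²`, its square integrates in `y` to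
`≲ a⁻¹ / log⁴`, and the `x`-integral of `a⁻¹` over `[0, t]` is `log T - log(T - t) ≲ |log(T - t)|`.
Hence `‖g_t ⊗₁ g_t‖² ≲ |log(T - t)|⁻³`, and `|log(T - t)| = (2α - 1) λ_t`.
-/

open Set

noncomputable def minMaxRatio (a b : ℝ) : ℝ := min a b / max a b

section minMaxRatio

variable {a b c : ℝ}

lemma minMaxRatio_comm (a b : ℝ) : minMaxRatio a b = minMaxRatio b a := by
  rw [minMaxRatio, minMaxRatio, min_comm, max_comm]

lemma minMaxRatio_of_le (hab : a ≤ b) : minMaxRatio a b = a / b := by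
  rw [minMaxRatio, min_eq_left hab, max_eq_right hab]

lemma minMaxRatio_pos (ha : 0 < a) (hb : 0 < b) : 0 < minMaxRatio a b :=
  div_pos (lt_min ha hb) (lt_max_of_lt_left ha)

lemma minMaxRatio_le_one (ha : 0 ≤ a) : minMaxRatio a b ≤ 1 :=
  div_le_one_of_le₀ min_le_max (le_max_of_le_left ha)

/-- Since `minMaxRatio a b = exp (-|log a - log b|)`, this is the triangle inequality for
`|log a - log b|`. -/
lemma minMaxRatio_mul_le (ha : 0 < a) (hb : 0 < b) (hc : 0 < c) :
    minMaxRatio a b * minMaxRatio b c ≤ minMaxRatio a c := by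
  unfold minMaxRatio
  rcases le_total a b with hab | hab <;> rcases le_total b c with hbc | hbc <;>
    rcases le_total a c with hac | hac <;>
    simp only [min_eq_left, min_eq_right, max_eq_left, max_eq_right, *] <;>
    rw [div_mul_div_comm, div_le_div_iff₀ (by positivity) (by positivity)] <;>
    nlinarith [mul_pos ha hb, mul_pos hb hc, mul_pos ha hc, mul_pos (mul_pos ha hb) hc]

lemma minMaxRatio_rpow_mul_rpow_le {w β : ℝ} (ha : 0 < a) (hw : 0 < w) (hb : 0 < b)
    (hβ : 0 ≤ β) :
    minMaxRatio a w ^ β * minMaxRatio w b ^ β ≤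
      minMaxRatio a w ^ (β / 2) * minMaxRatio a b ^ (β / 2) := by
  have haw := minMaxRatio_pos ha hw
  have hwb := minMaxRatio_pos hw hb
  calc minMaxRatio a w ^ β * minMaxRatio w b ^ β
      = minMaxRatio a w ^ (β / 2) * (minMaxRatio a w * minMaxRatio w b) ^ (β / 2) *
          minMaxRatio w b ^ (β / 2) := by
        rw [mul_rpow haw.le hwb.le]
        conv_lhs => rw [← add_halves β, rpow_add haw, rpow_add hwb]
        ring
    _ ≤ minMaxRatio a w ^ (β / 2) * minMaxRatio a b ^ (β / 2) * 1 := by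
        have hab := minMaxRatio_pos ha hb
        gcongr
        · exact minMaxRatio_mul_le ha hw hb
        · exact rpow_le_one hwb.le (minMaxRatio_le_one hw.le) (by linarith)
    _ = _ := mul_one _

end minMaxRatio

section PowerIntegrals

variable {T a b r : ℝ}

lemma integral_sub_rpow_le_of_lt_neg_one (haT : a < T) (hbT : b < T) (hr : r < -1) :
    ∫ u in a..b, (T - u) ^ r ≤ (T - b) ^ (r + 1) / -(r + 1) := by
  have h0 : (0 : ℝ) ∉ uIcc (T - b) (T - a) := fun h => by
    rcases le_total (T - b) (T - a) with h' | h'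
    · rw [uIcc_of_le h'] at h; linarith [h.1]
    · rw [uIcc_of_ge h'] at h; linarith [h.1]
  rw [intervalIntegral.integral_comp_sub_left (fun s => s ^ r), integral_rpow (Or.inr ⟨hr.ne, h0⟩),
    ← neg_div_neg_eq, neg_sub]
  exact div_le_div_of_nonneg_right (sub_le_self _ (rpow_nonneg (by linarith) _)) (by linarith)

lemma integral_sub_rpow_le_of_neg_one_lt (hbT : b ≤ T) (hr : -1 < r) :
    ∫ u in a..b, (T - u) ^ r ≤ (T - a) ^ (r + 1) / (r + 1) := by
  rw [intervalIntegral.integral_comp_sub_left (fun s => s ^ r), integral_rpow (Or.inl hr),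
    div_le_div_iff_of_pos_right (by linarith)]
  exact sub_le_self _ (rpow_nonneg (by linarith) _)

lemma integral_sub_rpow_neg_one (haT : a < T) (hbT : b < T) :
    ∫ u in a..b, (T - u) ^ (-1 : ℝ) = log (T - a) - log (T - b) := by
  simp only [rpow_neg_one]
  rw [intervalIntegral.integral_comp_sub_left (fun s => s⁻¹),
    integral_inv_of_pos (by linarith) (by linarith), log_div (by linarith) (by linarith)]

end PowerIntegrals

lemma continuousOn_sub_rpow_mul_minMaxRatio_rpow {T t a r γ : ℝ} (htT : t < T) (ha : 0 < a)
    (hγ : 0 ≤ γ) : ContinuousOn (fun u => (T - u) ^ r * minMaxRatio a (T - u) ^ γ) (Iic t) := by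
  refine ContinuousOn.mul ?_ ?_
  · exact (continuousOn_const.sub continuousOn_id).rpow_const
      fun u hu => Or.inl (show T - u ≠ 0 by linarith [mem_Iic.1 hu])
  · refine ContinuousOn.rpow_const ?_ fun _ _ => Or.inr hγ
    exact ContinuousOn.div (by fun_prop) (by fun_prop) fun u _ => (lt_max_of_lt_left ha).ne'

lemma integral_inv_mul_minMaxRatio_rpow_le_left {T a x γ : ℝ} (hax : a ≤ x) (hxT : x < T)
    (hγ : 0 < γ) :
    ∫ u in a..x, (T - u) ^ (-1 : ℝ) * minMaxRatio (T - x) (T - u) ^ γ ≤ 1 / γ := by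
  have hTx : 0 < T - x := by linarith
  have heq : ∫ u in a..x, (T - u) ^ (-1 : ℝ) * minMaxRatio (T - x) (T - u) ^ γ =
      (T - x) ^ γ * ∫ u in a..x, (T - u) ^ (-1 - γ) := by
    rw [← intervalIntegral.integral_const_mul]
    refine intervalIntegral.integral_congr fun u hu => ?_
    rw [uIcc_of_le hax] at hu
    have hTu : 0 < T - u := by linarith [hu.2]
    simp only [minMaxRatio_of_le (by linarith [hu.2] : T - x ≤ T - u),
      div_rpow hTx.le hTu.le, rpow_sub hTu, rpow_neg_one]
    field_simp
  calc ∫ u in a..x, (T - u) ^ (-1 : ℝ) * minMaxRatio (T - x) (T - u) ^ γ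
      ≤ (T - x) ^ γ * ((T - x) ^ (-1 - γ + 1) / -(-1 - γ + 1)) := by
        rw [heq]
        gcongr
        exact integral_sub_rpow_le_of_lt_neg_one (by linarith) hxT (by linarith)
    _ = 1 / γ := by
        rw [show -1 - γ + 1 = -γ by ring, neg_neg, rpow_neg hTx.le]
        field_simp

lemma integral_inv_mul_minMaxRatio_rpow_le_right {T x b γ : ℝ} (hxb : x ≤ b) (hbT : b < T)
    (hγ : 0 < γ) :
    ∫ u in x..b, (T - u) ^ (-1 : ℝ) * minMaxRatio (T - x) (T - u) ^ γ ≤ 1 / γ := by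
  have hTx : 0 < T - x := by linarith
  have heq : ∫ u in x..b, (T - u) ^ (-1 : ℝ) * minMaxRatio (T - x) (T - u) ^ γ =
      (T - x) ^ (-γ) * ∫ u in x..b, (T - u) ^ (γ - 1) := by
    rw [← intervalIntegral.integral_const_mul]
    refine intervalIntegral.integral_congr fun u hu => ?_
    rw [uIcc_of_le hxb] at hu
    have hTu : 0 < T - u := by linarith [hu.2]
    simp only [minMaxRatio_comm (T - x), minMaxRatio_of_le (by linarith [hu.1] : T - u ≤ T - x),
      div_rpow hTu.le hTx.le, rpow_sub hTu, rpow_neg hTx.le, rpow_neg_one, rpow_one]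
    field_simp
  calc ∫ u in x..b, (T - u) ^ (-1 : ℝ) * minMaxRatio (T - x) (T - u) ^ γ
      ≤ (T - x) ^ (-γ) * ((T - x) ^ (γ - 1 + 1) / (γ - 1 + 1)) := by
        rw [heq]
        gcongr
        exact integral_sub_rpow_le_of_neg_one_lt hbT.le (by linarith)
    _ = 1 / γ := by
        rw [show γ - 1 + 1 = γ by ring, rpow_neg hTx.le]
        field_simp

lemma integral_inv_mul_minMaxRatio_rpow_le {T t x γ : ℝ} (hx : x ∈ Icc 0 t) (htT : t < T)
    (hγ : 0 < γ) :
    ∫ u in Icc 0 t, (T - u) ^ (-1 : ℝ) * minMaxRatio (T - x) (T - u) ^ γ ≤ 2 / γ := by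
  obtain ⟨hx0, hxt⟩ := hx
  have hf : ContinuousOn (fun u => (T - u) ^ (-1 : ℝ) * minMaxRatio (T - x) (T - u) ^ γ)
      (Icc 0 t) :=
    (continuousOn_sub_rpow_mul_minMaxRatio_rpow htT (by linarith) hγ.le).mono Icc_subset_Iic_self
  rw [integral_Icc_eq_integral_Ioc, ← intervalIntegral.integral_of_le (hx0.trans hxt),
    ← intervalIntegral.integral_add_adjacent_intervals
      (hf.mono (uIcc_subset_Icc ⟨le_rfl, hx0.trans hxt⟩ ⟨hx0, hxt⟩)).intervalIntegrable
      (hf.mono (uIcc_subset_Icc ⟨hx0, hxt⟩ ⟨hx0.trans hxt, le_rfl⟩)).intervalIntegrable]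
  linarith [integral_inv_mul_minMaxRatio_rpow_le_left hx0 (hxt.trans_lt htT) hγ,
    integral_inv_mul_minMaxRatio_rpow_le_right hxt htT hγ, show 2 / γ = 1 / γ + 1 / γ by ring]

lemma setIntegral_le_of_support_subset {X : Type*} [MeasurableSpace X] {μ : Measure X}
    {s S : Set X} {F f : X → ℝ} (hs : MeasurableSet s) (hsS : s ⊆ S) (hF0 : ∀ x, 0 ≤ F x)
    (hF : Function.support F ⊆ s) (hFf : ∀ x ∈ s, F x ≤ f x) (hf : IntegrableOn f s μ) :
    ∫ x in S, F x ∂μ ≤ ∫ x in s, f x ∂μ := by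
  have hind : ∀ x, F x ≤ s.indicator f x := fun x => by
    by_cases hx : x ∈ s
    · rw [indicator_of_mem hx]; exact hFf x hx
    · rw [indicator_of_notMem hx, Function.notMem_support.1 (fun h => hx (hF h))]
  calc ∫ x in S, F x ∂μ ≤ ∫ x in S, s.indicator f x ∂μ :=
        integral_mono_of_nonneg (ae_of_all _ hF0) (hf.integrable_indicator hs).restrict
          (ae_of_all _ hind)
    _ = ∫ x in s, f x ∂μ := by
        rw [integral_indicator hs, Measure.restrict_restrict hs, inter_eq_self_of_subset_left hsS]

section Kernel

variable {T α t x y u : ℝ}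

lemma gker_of_notMem_left (hx : x ∉ Icc 0 t) (u : ℝ) : gker T α t x u = 0 :=
  if_neg fun h => hx h.1

lemma gker_of_notMem_right (hu : u ∉ Icc 0 t) (x : ℝ) : gker T α t x u = 0 :=
  if_neg fun h => hu h.2

lemma gker_nonneg (hα : 1 / 2 ≤ α) (htT : t < T) (x u : ℝ) : 0 ≤ gker T α t x u := by
  unfold gker
  split_ifs with h
  · obtain ⟨⟨-, hxt⟩, ⟨-, hut⟩⟩ := h
    have hTx : 0 < T - x := by linarith
    have hTu : 0 < T - u := by linarith
    have hmax : (T - t) ^ (2 * α - 1) ≤ (T - max x u) ^ (2 * α - 1) :=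
      rpow_le_rpow (by linarith) (by linarith [max_le hxt hut]) (by linarith)
    have := sub_nonneg.2 hmax
    positivity
  · exact le_rfl

lemma rpow_neg_mul_rpow_neg_mul_min_rpow {a w : ℝ} (ha : 0 < a) (hw : 0 < w) :
    a ^ (-α) * w ^ (-α) * min a w ^ (2 * α - 1) =
      a ^ (-1 / 2 : ℝ) * w ^ (-1 / 2 : ℝ) * minMaxRatio a w ^ (α - 1 / 2) := by
  rcases le_total a w with h | h
  · rw [min_eq_left h, minMaxRatio_of_le h]
    simp only [rpow_def_of_pos ha, rpow_def_of_pos hw, rpow_def_of_pos (div_pos ha hw),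
      log_div ha.ne' hw.ne', ← exp_add]
    ring_nf
  · rw [min_eq_right h, minMaxRatio_comm, minMaxRatio_of_le h]
    simp only [rpow_def_of_pos ha, rpow_def_of_pos hw, rpow_def_of_pos (div_pos hw ha),
      log_div hw.ne' ha.ne', ← exp_add]
    ring_nf

lemma gker_le (htT : t < T) (hx : x ∈ Icc 0 t) (hu : u ∈ Icc 0 t) :
    gker T α t x u ≤ (T - x) ^ (-1 / 2 : ℝ) * (T - u) ^ (-1 / 2 : ℝ) *
      minMaxRatio (T - x) (T - u) ^ (α - 1 / 2) / |log (T - t)| := by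
  have hTx : 0 < T - x := by linarith [hx.2]
  have hTu : 0 < T - u := by linarith [hu.2]
  rw [gker, if_pos ⟨hx, hu⟩, ← rpow_neg_mul_rpow_neg_mul_min_rpow hTx hTu, min_sub_sub_left]
  gcongr
  exact sub_le_self _ (rpow_nonneg (by linarith) _)

lemma gker_mul_gker_le (hα : 1 / 2 ≤ α) (htT : t < T) (hx : x ∈ Icc 0 t) (hy : y ∈ Icc 0 t)
    (hu : u ∈ Icc 0 t) :
    gker T α t x u * gker T α t y u ≤
      (T - x) ^ (-1 / 2 : ℝ) * (T - y) ^ (-1 / 2 : ℝ) *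
          minMaxRatio (T - x) (T - y) ^ ((α - 1 / 2) / 2) / |log (T - t)| ^ 2 *
        ((T - u) ^ (-1 : ℝ) * minMaxRatio (T - x) (T - u) ^ ((α - 1 / 2) / 2)) := by
  have hTx : 0 < T - x := by linarith [hx.2]
  have hTy : 0 < T - y := by linarith [hy.2]
  have hTu : 0 < T - u := by linarith [hu.2]
  calc gker T α t x u * gker T α t y u
      ≤ ((T - x) ^ (-1 / 2 : ℝ) * (T - u) ^ (-1 / 2 : ℝ) *
            minMaxRatio (T - x) (T - u) ^ (α - 1 / 2) / |log (T - t)|) *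
          ((T - y) ^ (-1 / 2 : ℝ) * (T - u) ^ (-1 / 2 : ℝ) *
            minMaxRatio (T - y) (T - u) ^ (α - 1 / 2) / |log (T - t)|) :=
        mul_le_mul (gker_le htT hx hu) (gker_le htT hy hu) (gker_nonneg hα htT y u)
          ((gker_nonneg hα htT x u).trans (gker_le htT hx hu))
    _ = (T - x) ^ (-1 / 2 : ℝ) * (T - y) ^ (-1 / 2 : ℝ) / |log (T - t)| ^ 2 *
          ((T - u) ^ (-1 / 2 : ℝ) * (T - u) ^ (-1 / 2 : ℝ)) *
          (minMaxRatio (T - x) (T - u) ^ (α - 1 / 2) *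
            minMaxRatio (T - u) (T - y) ^ (α - 1 / 2)) := by
        rw [minMaxRatio_comm (T - y)]; ring
    _ ≤ (T - x) ^ (-1 / 2 : ℝ) * (T - y) ^ (-1 / 2 : ℝ) / |log (T - t)| ^ 2 *
          ((T - u) ^ (-1 / 2 : ℝ) * (T - u) ^ (-1 / 2 : ℝ)) *
          (minMaxRatio (T - x) (T - u) ^ ((α - 1 / 2) / 2) *
            minMaxRatio (T - x) (T - y) ^ ((α - 1 / 2) / 2)) := by
        refine mul_le_mul_of_nonneg_left ?_ (by positivity)
        exact minMaxRatio_rpow_mul_rpow_le hTx hTu hTy (by linarith)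
    _ = _ := by
        rw [← rpow_add hTu]; norm_num; ring

end Kernel

section Contraction

variable {T α t x y : ℝ}

local notation "G" => contr T (gker T α t) (gker T α t)

lemma contr_gker_nonneg (hα : 1 / 2 ≤ α) (htT : t < T) (x y : ℝ) : 0 ≤ G x y :=
  integral_nonneg fun u => mul_nonneg (gker_nonneg hα htT x u) (gker_nonneg hα htT y u)

lemma contr_gker_of_notMem (h : ¬(x ∈ Icc 0 t ∧ y ∈ Icc 0 t)) : G x y = 0 := by
  rcases not_and_or.1 h with h | h <;>
    simp [contr, gker_of_notMem_left h]

lemma contr_gker_le (hα : 1 / 2 < α) (htT : t < T) (hx : x ∈ Icc 0 t) (hy : y ∈ Icc 0 t) :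
    G x y ≤ 4 / (α - 1 / 2) * ((T - x) ^ (-1 / 2 : ℝ) * (T - y) ^ (-1 / 2 : ℝ) *
      minMaxRatio (T - x) (T - y) ^ ((α - 1 / 2) / 2)) / |log (T - t)| ^ 2 := by
  have hTx : 0 < T - x := by linarith [hx.2]
  have hTy : 0 < T - y := by linarith [hy.2]
  have hρ := minMaxRatio_pos hTx hTy
  set β := α - 1 / 2 with hβ
  set P := (T - x) ^ (-1 / 2 : ℝ) * (T - y) ^ (-1 / 2 : ℝ) *
    minMaxRatio (T - x) (T - y) ^ (β / 2) / |log (T - t)| ^ 2 with hP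
  have hsupp : Function.support (fun u => gker T α t x u * gker T α t y u) ⊆ Icc 0 t :=
    fun u hu => by_contra fun h => hu (by simp [gker_of_notMem_right h])
  have hint : IntegrableOn
      (fun u => (T - u) ^ (-1 : ℝ) * minMaxRatio (T - x) (T - u) ^ (β / 2)) (Icc 0 t) :=
    ((continuousOn_sub_rpow_mul_minMaxRatio_rpow htT hTx (by linarith)).mono
      Icc_subset_Iic_self).integrableOn_Icc
  calc G x y = ∫ u in Icc 0 T, gker T α t x u * gker T α t y u := rfl
    _ ≤ ∫ u in Icc 0 t, P * ((T - u) ^ (-1 : ℝ) * minMaxRatio (T - x) (T - u) ^ (β / 2)) :=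
        setIntegral_le_of_support_subset measurableSet_Icc (Icc_subset_Icc_right htT.le)
          (fun u => mul_nonneg (gker_nonneg hα.le htT x u) (gker_nonneg hα.le htT y u)) hsupp
          (fun u hu => gker_mul_gker_le hα.le htT hx hy hu) (hint.const_mul P)
    _ = P * ∫ u in Icc 0 t, (T - u) ^ (-1 : ℝ) * minMaxRatio (T - x) (T - u) ^ (β / 2) :=
        integral_const_mul _ _
    _ ≤ P * (2 / (β / 2)) := by
        gcongr
        exact integral_inv_mul_minMaxRatio_rpow_le hx htT (by linarith)
    _ = _ := by rw [hP]; field_simp; ring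

lemma contr_gker_mul_self_le (hα : 1 / 2 < α) (htT : t < T) (hx : x ∈ Icc 0 t)
    (hy : y ∈ Icc 0 t) :
    G x y * G x y ≤ (4 / (α - 1 / 2)) ^ 2 * (T - x) ^ (-1 : ℝ) / |log (T - t)| ^ 4 *
      ((T - y) ^ (-1 : ℝ) * minMaxRatio (T - x) (T - y) ^ (α - 1 / 2)) := by
  have hTx : 0 < T - x := by linarith [hx.2]
  have hTy : 0 < T - y := by linarith [hy.2]
  have hρ := minMaxRatio_pos hTx hTy
  calc G x y * G x y
      ≤ (4 / (α - 1 / 2) * ((T - x) ^ (-1 / 2 : ℝ) * (T - y) ^ (-1 / 2 : ℝ) *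
            minMaxRatio (T - x) (T - y) ^ ((α - 1 / 2) / 2)) / |log (T - t)| ^ 2) *
          (4 / (α - 1 / 2) * ((T - x) ^ (-1 / 2 : ℝ) * (T - y) ^ (-1 / 2 : ℝ) *
            minMaxRatio (T - x) (T - y) ^ ((α - 1 / 2) / 2)) / |log (T - t)| ^ 2) :=
        mul_self_le_mul_self (contr_gker_nonneg hα.le htT x y) (contr_gker_le hα htT hx hy)
    _ = (4 / (α - 1 / 2)) ^ 2 * ((T - x) ^ (-1 / 2 : ℝ) * (T - x) ^ (-1 / 2 : ℝ)) *
          ((T - y) ^ (-1 / 2 : ℝ) * (T - y) ^ (-1 / 2 : ℝ)) *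
          (minMaxRatio (T - x) (T - y) ^ ((α - 1 / 2) / 2) *
            minMaxRatio (T - x) (T - y) ^ ((α - 1 / 2) / 2)) / |log (T - t)| ^ 4 := by
        ring
    _ = _ := by
        rw [← rpow_add hTx, ← rpow_add hTy, ← rpow_add hρ, add_halves]
        norm_num
        ring

lemma integral_contr_gker_mul_self_le (hα : 1 / 2 < α) (htT : t < T) (hx : x ∈ Icc 0 t) :
    ∫ y in Icc 0 T, G x y * G x y ≤
      32 / (α - 1 / 2) ^ 3 * (T - x) ^ (-1 : ℝ) / |log (T - t)| ^ 4 := by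
  have hTx : 0 < T - x := by linarith [hx.2]
  set β := α - 1 / 2 with hβ
  set Q := (4 / β) ^ 2 * (T - x) ^ (-1 : ℝ) / |log (T - t)| ^ 4 with hQ
  have hsupp : Function.support (fun y => G x y * G x y) ⊆ Icc 0 t :=
    fun y hy => by_contra fun h => hy (by simp [contr_gker_of_notMem (fun h' => h h'.2)])
  have hint : IntegrableOn
      (fun y => (T - y) ^ (-1 : ℝ) * minMaxRatio (T - x) (T - y) ^ β) (Icc 0 t) :=
    ((continuousOn_sub_rpow_mul_minMaxRatio_rpow htT hTx (by linarith)).mono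
      Icc_subset_Iic_self).integrableOn_Icc
  calc ∫ y in Icc 0 T, G x y * G x y
      ≤ ∫ y in Icc 0 t, Q * ((T - y) ^ (-1 : ℝ) * minMaxRatio (T - x) (T - y) ^ β) :=
        setIntegral_le_of_support_subset measurableSet_Icc (Icc_subset_Icc_right htT.le)
          (fun y => mul_self_nonneg _) hsupp (fun y hy => contr_gker_mul_self_le hα htT hx hy)
          (hint.const_mul Q)
    _ = Q * ∫ y in Icc 0 t, (T - y) ^ (-1 : ℝ) * minMaxRatio (T - x) (T - y) ^ β :=
        integral_const_mul _ _
    _ ≤ Q * (2 / β) := by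
        gcongr
        exact integral_inv_mul_minMaxRatio_rpow_le hx htT (by linarith)
    _ = _ := by rw [hQ]; field_simp; ring

lemma normSq_contr_gker_le (hα : 1 / 2 < α) (ht0 : 0 ≤ t) (htT : t < T) :
    normSq T G ≤ 32 / (α - 1 / 2) ^ 3 * (log T - log (T - t)) / |log (T - t)| ^ 4 := by
  have hsupp : Function.support (fun x => ∫ y in Icc 0 T, G x y * G x y) ⊆ Icc 0 t :=
    fun x hx => by_contra fun h => hx (by simp [contr_gker_of_notMem (fun h' => h h'.1)])
  have hint : IntegrableOn (fun x : ℝ => (T - x) ^ (-1 : ℝ)) (Icc 0 t) := by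
    refine ContinuousOn.integrableOn_Icc ?_
    exact (continuousOn_const.sub continuousOn_id).rpow_const
      fun x hx => Or.inl (show T - x ≠ 0 by linarith [hx.2])
  calc normSq T G = ∫ x in Icc 0 T, ∫ y in Icc 0 T, G x y * G x y := rfl
    _ ≤ ∫ x in Icc 0 t, 32 / (α - 1 / 2) ^ 3 / |log (T - t)| ^ 4 * (T - x) ^ (-1 : ℝ) := by
        refine setIntegral_le_of_support_subset measurableSet_Icc (Icc_subset_Icc_right htT.le)
          (fun x => integral_nonneg fun y => mul_self_nonneg _) hsupp (fun x hx => ?_)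
          (hint.const_mul _)
        rw [div_mul_eq_mul_div]
        exact integral_contr_gker_mul_self_le hα htT hx
    _ = 32 / (α - 1 / 2) ^ 3 * (log T - log (T - t)) / |log (T - t)| ^ 4 := by
        rw [integral_const_mul, integral_Icc_eq_integral_Ioc, ← intervalIntegral.integral_of_le ht0,
          integral_sub_rpow_neg_one (by linarith) htT, sub_zero]
        ring

lemma normSq_contr_gker_le_div_lam_pow (hα : 1 / 2 < α) (ht0 : 0 ≤ t) (htT : t < T)
    (hlog : log (T - t) ≤ -1) :
    normSq T G ≤ 256 * (|log T| + 1) / (2 * α - 1) ^ 6 / lam T α t ^ 3 := by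
  have h2α : 0 < 2 * α - 1 := by linarith
  have hL : |log (T - t)| = -log (T - t) := abs_of_neg (by linarith)
  have hgap : log T - log (T - t) ≤ (|log T| + 1) * -log (T - t) := by
    nlinarith [le_abs_self (log T), abs_nonneg (log T)]
  calc normSq T G
      ≤ 32 / (α - 1 / 2) ^ 3 * (log T - log (T - t)) / |log (T - t)| ^ 4 :=
        normSq_contr_gker_le hα ht0 htT
    _ ≤ 32 / (α - 1 / 2) ^ 3 * ((|log T| + 1) * -log (T - t)) / (-log (T - t)) ^ 4 := by
        rw [hL]
        gcongr
    _ = _ := by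
        rw [lam, hL]
        field_simp
        ring

end Contraction

theorem stmt_11_general (T α : ℝ) (hα : 1 / 2 < α) :
    ∃ C > 0, ∀ t : ℝ, max 0 (T - 1 / Real.exp 1) < t → t < T →
      Real.sqrt (normSq T (contr T (gker T α t) (gker T α t)))
        ≤ C / (lam T α t) ^ ((3 : ℝ) / 2) := by
  have h2α : 0 < 2 * α - 1 := by linarith
  refine ⟨16 * √(|log T| + 1) / (2 * α - 1) ^ 3, by positivity, fun t ht htT => ?_⟩
  have hlog : log (T - t) < -1 := by
    have := (le_max_right _ _).trans_lt ht
    calc log (T - t) < log (1 / exp 1) := log_lt_log (by linarith) (by linarith)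
      _ = -1 := by rw [one_div, log_inv, log_exp]
  have hlam : 0 ≤ lam T α t := div_nonneg (abs_nonneg _) h2α.le
  calc √(normSq T (contr T (gker T α t) (gker T α t)))
      ≤ √(256 * (|log T| + 1) / (2 * α - 1) ^ 6 / lam T α t ^ 3) :=
        sqrt_le_sqrt (normSq_contr_gker_le_div_lam_pow hα
          ((le_max_left _ _).trans_lt ht).le htT hlog.le)
    _ = √((16 * √(|log T| + 1) / (2 * α - 1) ^ 3 / lam T α t ^ ((3 : ℝ) / 2)) ^ 2) := by
        rw [div_pow, ← rpow_natCast (lam T α t ^ _), ← rpow_mul hlam, div_pow, mul_pow,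
          sq_sqrt (by positivity), ← pow_mul]
        norm_num
    _ = _ := sqrt_sq (by positivity)

theorem stmt_11 (T α : ℝ) (hT : 0 < T) (hα : 1 / 2 < α) :
    ∃ C > 0, ∀ t : ℝ, max 0 (T - 1 / Real.exp 1) < t → t < T →
      Real.sqrt (normSq T (contr T (gker T α t) (gker T α t)))
        ≤ C / (lam T α t) ^ ((3 : ℝ) / 2) :=
  stmt_11_general T α hα
end
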